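/- arXiv:1809.04122 — 12 statements merged into one kernel-verified Lean document; each statement's English description precedes it below -/
import Mathlib

section
/- Let R be a Dedekind domain, let S be an integral domain containing R, and let θ ∈ S be integral over R, with (monic) minimal polynomial f ∈ R[t] of θ over the fraction field of R (its coefficients lie in R since R is integrally closed). Then R[θ] is a Dedekind domain if and only if, for every maximal ideal M of the polynomial ring R[t], the polynomial f does not lie in M². -/
/-!
Write `R[θ] ≅ R[t]/(f)`. A nonzero prime of `R[θ]` is the image of a maximal ideal `M ∋ f` of
`R[t]` lying over a maximal ideal `q` of `R`, so `M = qR[t] + (g)` and `M/M²` is spanned by two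
elements. If `f ∉ M²`, then `f` can replace one of them, so the maximal ideal of `R[θ]` localised at
`M/(f)` is principal modulo its square, hence principal by Nakayama, and the localisation is a DVR.
Conversely, if `R[θ]` is Dedekind and `f ∈ M²`, a uniformiser of `R[θ]` at `M/(f)` lifts to a
generator of `M` modulo `M²`, so `R[t]_M` is a DVR in which the prime element `f` lies in the
square of the maximal ideal, which is absurd.
-/

open Polynomial Ideal IsLocalRing

namespace Ideal

variable {A : Type*} [CommRing A]

theorem exists_le_span_sup_sq_of_isDedekindDomain [IsDedekindDomain A] (q : Ideal A)
    [q.IsMaximal] : ∃ x ∈ q, q ≤ span {x} ⊔ q ^ 2 := by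
  by_cases h : q ≤ q ^ 2
  · exact ⟨0, q.zero_mem, le_sup_of_le_right h⟩
  obtain ⟨x, hxq, hxq2⟩ := SetLike.not_le_iff_exists.mp h
  refine ⟨x, hxq, ?_⟩
  have hq : Prime q := (prime_iff_isPrime (by rintro rfl; simp at h)).2 inferInstance
  have hle : span {x} ⊔ q ^ 2 ≤ q :=
    sup_le ((span_singleton_le_iff_mem _).2 hxq) (pow_le_self two_ne_zero)
  obtain ⟨i, hi, hJ⟩ := (dvd_prime_pow hq 2).1 (dvd_iff_le.2 (le_sup_right (a := span {x})))
  rw [associated_iff_eq] at hJ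
  interval_cases i
  · rw [hJ, pow_zero, one_eq_top, top_le_iff] at hle
    exact absurd hle (IsMaximal.ne_top ‹_›)
  · rw [hJ, pow_one]
  · exact absurd (hJ ▸ mem_sup_left (mem_span_singleton_self x)) hxq2

theorem mem_sup_sq_of_mul_mem {M J : Ideal A} [M.IsMaximal] {a u : A} (ha : a ∉ M) (hu : u ∈ M)
    (h : a * u ∈ J ⊔ M ^ 2) : u ∈ J ⊔ M ^ 2 := by
  obtain ⟨b, i, hi, hbi⟩ := IsMaximal.exists_inv ‹_› ha
  have hu' : u = b * (a * u) + i * u := by rw [← mul_assoc, ← add_mul, hbi, one_mul]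
  rw [hu']
  exact add_mem (mul_mem_left _ b h) (mem_sup_right (pow_two M ▸ mul_mem_mul hi hu))

theorem le_span_sup_span_sup_sq_of_notMem {M : Ideal A} [M.IsMaximal] {u v f a c e : A}
    (hM : M ≤ span {u} ⊔ span {v} ⊔ M ^ 2) (hu : u ∈ M) (ha : a ∉ M) (he : e ∈ M ^ 2)
    (hf : a * u + c * v + e = f) : M ≤ span {v} ⊔ span {f} ⊔ M ^ 2 := by
  have hau : a * u ∈ span {v} ⊔ span {f} ⊔ M ^ 2 := by
    rw [show a * u = -(c * v) + f + -e by rw [← hf]; ring]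
    exact add_mem (add_mem (mem_sup_left (mem_sup_left (neg_mem (mem_span_singleton'.2 ⟨c, rfl⟩))))
      (mem_sup_left (mem_sup_right (mem_span_singleton_self f)))) (mem_sup_right (neg_mem he))
  refine hM.trans (sup_le (sup_le ?_ (le_sup_of_le_left le_sup_left)) le_sup_right)
  exact (span_singleton_le_iff_mem _).2 (mem_sup_sq_of_mul_mem ha hu hau)

theorem exists_le_span_sup_span_sup_sq_of_notMem_sq {M : Ideal A} [M.IsMaximal] {u v f : A}
    (hu : u ∈ M) (hv : v ∈ M) (hM : M ≤ span {u} ⊔ span {v} ⊔ M ^ 2) (hfM : f ∈ M)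
    (hf : f ∉ M ^ 2) :
    ∃ w ∈ M, M ≤ span {w} ⊔ span {f} ⊔ M ^ 2 := by
  obtain ⟨uv, huv, e, he, hfe⟩ := Submodule.mem_sup.1 (hM hfM)
  obtain ⟨au, hau, cv, hcv, rfl⟩ := Submodule.mem_sup.1 huv
  obtain ⟨a, rfl⟩ := mem_span_singleton'.1 hau
  obtain ⟨c, rfl⟩ := mem_span_singleton'.1 hcv
  by_cases ha : a ∈ M
  · by_cases hc : c ∈ M
    · refine absurd (hfe ▸ add_mem (add_mem ?_ ?_) he) hf <;> rw [pow_two] <;>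
        exact mul_mem_mul ‹_› ‹_›
    refine ⟨u, hu, le_span_sup_span_sup_sq_of_notMem (c := a) ?_ hv hc he (by rw [← hfe]; ring)⟩
    rwa [sup_comm (a := span {v})]
  · exact ⟨v, hv, le_span_sup_span_sup_sq_of_notMem hM hu ha he hfe⟩

end Ideal

theorem IsLocalRing.maximalIdeal_eq_span_of_le_sup_sq {W : Type*} [CommRing W] [IsLocalRing W]
    [IsNoetherianRing W] {t : W} (ht : t ∈ maximalIdeal W)
    (h : maximalIdeal W ≤ span {t} ⊔ maximalIdeal W ^ 2) : maximalIdeal W = span {t} := by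
  refine le_antisymm ?_ ((span_singleton_le_iff_mem _).2 ht)
  refine Submodule.le_of_le_smul_of_le_jacobson_bot (IsNoetherian.noetherian _)
    (maximalIdeal_le_jacobson ⊥) ?_
  rwa [smul_eq_mul, ← pow_two]

theorem Ideal.isDiscreteValuationRing_localization_of_le_span_sup_sq {B : Type*} [CommRing B]
    [IsDomain B] [IsNoetherianRing B] {P : Ideal B} [P.IsPrime] (hP : P ≠ ⊥) {y : B} (hy : y ∈ P)
    (h : P ≤ span {y} ⊔ P ^ 2) : IsDiscreteValuationRing (Localization.AtPrime P) := by
  have hmap : P.map (algebraMap B (Localization.AtPrime P)) = maximalIdeal _ :=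
    Localization.AtPrime.map_eq_maximalIdeal
  have hle := map_mono (f := algebraMap B (Localization.AtPrime P)) h
  rw [map_sup, map_span, Set.image_singleton, Ideal.map_pow, hmap] at hle
  have hyP := hmap ▸ mem_map_of_mem (algebraMap B (Localization.AtPrime P)) hy
  have hbot : maximalIdeal (Localization.AtPrime P) ≠ ⊥ := by
    rwa [← hmap, Ne, map_eq_bot_iff_of_injective
      (IsLocalization.injective _ P.primeCompl_le_nonZeroDivisors)]
  have hnf : ¬IsField (Localization.AtPrime P) := fun hf ↦
    hbot (isField_iff_maximalIdeal_eq.1 hf)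
  have hprinc : (maximalIdeal (Localization.AtPrime P)).IsPrincipal :=
    ⟨_, maximalIdeal_eq_span_of_le_sup_sq hyP hle⟩
  exact ((IsDiscreteValuationRing.TFAE _ hnf).out 0 4).2 hprinc

theorem IsDiscreteValuationRing.notMem_maximalIdeal_sq {A : Type*} [CommRing A] [IsDomain A]
    [IsDiscreteValuationRing A] {f : A} (hf : Prime f) : f ∉ IsLocalRing.maximalIdeal A ^ 2 := by
  rw [(irreducible_iff_uniformizer f).1 hf.irreducible, span_singleton_pow, mem_span_singleton]
  intro hdvd
  have := (pow_dvd_pow_iff (n := 2) (m := 1) hf.ne_zero hf.not_isUnit).1 (by rwa [pow_one])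
  omega

theorem Polynomial.exists_eq_map_C_sup_span {R : Type*} [CommRing R] {q : Ideal R} [q.IsMaximal]
    {M : Ideal R[X]} (hM : q.map C ≤ M) : ∃ g, M = q.map C ⊔ span {g} := by
  let := Quotient.field q
  set ψ := mapRingHom (Ideal.Quotient.mk q)
  have hψ : Function.Surjective ψ := map_surjective _ Quotient.mk_surjective
  have hker : RingHom.ker ψ = q.map C := by rw [ker_mapRingHom, mk_ker]
  obtain ⟨g', hg'⟩ := (IsPrincipalIdealRing.principal (M.map ψ)).principal
  obtain ⟨g, rfl⟩ := hψ g'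
  have hMψ : (M.map ψ).comap ψ = M := by
    rw [comap_map_of_surjective' _ hψ, hker, sup_eq_left.2 hM]
  refine ⟨g, ?_⟩
  calc M = (M.map ψ).comap ψ := hMψ.symm
    _ = ((span {g}).map ψ).comap ψ := by rw [hg', map_span, Set.image_singleton, submodule_span_eq]
    _ = q.map C ⊔ span {g} := by rw [comap_map_of_surjective' _ hψ, hker, sup_comm]

theorem Polynomial.exists_le_span_sup_span_sup_sq {R : Type*} [CommRing R] [IsDedekindDomain R]
    {M : Ideal R[X]} [(M.comap C).IsMaximal] :
    ∃ u ∈ M, ∃ v ∈ M, M ≤ span {u} ⊔ span {v} ⊔ M ^ 2 := by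
  obtain ⟨x, hx, hqx⟩ := exists_le_span_sup_sq_of_isDedekindDomain (M.comap C)
  obtain ⟨g, hg⟩ := exists_eq_map_C_sup_span (map_comap_le : (M.comap C).map C ≤ M)
  have hC : (M.comap C).map C ≤ span {C x} ⊔ M ^ 2 :=
    calc _ ≤ (span {x} ⊔ M.comap C ^ 2).map C := map_mono hqx
      _ = span {C x} ⊔ (M.comap C).map C ^ 2 := by
        rw [Ideal.map_sup, map_span, Set.image_singleton, Ideal.map_pow]
      _ ≤ span {C x} ⊔ M ^ 2 := sup_le_sup_left (pow_right_mono map_comap_le 2) _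
  refine ⟨C x, hx, g, hg ▸ mem_sup_right (mem_span_singleton_self g), ?_⟩
  exact hg.le.trans (sup_le (hC.trans (sup_le_sup_right le_sup_left _))
    (le_sup_of_le_left le_sup_right))

theorem Ideal.notMem_sq_of_isDedekindDomain {A B : Type*} [CommRing A] [IsDomain A]
    [IsNoetherianRing A] [CommRing B] [IsDedekindDomain B] {π : A →+* B}
    (hπ : Function.Surjective π) {f : A} (hf0 : f ≠ 0) (hker : RingHom.ker π = span {f})
    (M : Ideal A) [M.IsMaximal] : f ∉ M ^ 2 := by
  intro hfM2
  have hfM : f ∈ M := pow_le_self two_ne_zero hfM2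
  have hfM' : span {f} ≤ M := (span_singleton_le_iff_mem _).2 hfM
  have hMπ : (M.map π).comap π = M := by
    rw [comap_map_of_surjective' _ hπ, hker, sup_eq_left.2 hfM']
  have := IsMaximal.map_of_surjective_of_ker_le hπ (hker ▸ hfM')
  obtain ⟨y₀, hy, hle⟩ := exists_le_span_sup_sq_of_isDedekindDomain (M.map π)
  obtain ⟨y, rfl⟩ := hπ y₀
  have hM : M ≤ span {y} ⊔ M ^ 2 := by
    rw [← Ideal.map_pow, ← Set.image_singleton, ← map_span, ← Ideal.map_sup,
      map_le_iff_le_comap, comap_map_of_surjective' _ hπ, hker] at hle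
    exact hle.trans (sup_le le_rfl ((span_singleton_le_iff_mem _).2 (mem_sup_right hfM2)))
  have hM0 : M ≠ ⊥ := fun h ↦ hf0 (by simpa [h] using hfM)
  have := isDiscreteValuationRing_localization_of_le_span_sup_sq hM0 (hMπ ▸ mem_comap.2 hy) hM
  set ψ := algebraMap A (Localization.AtPrime M)
  have hψf : Prime (ψ f) := by
    have : (span {f}).IsPrime := hker ▸ RingHom.ker_isPrime π
    have hP := isPrime_map_of_isLocalizationAtPrime M (S := Localization.AtPrime M) hfM'
    rw [map_span, Set.image_singleton] at hP
    exact (span_singleton_prime ((map_ne_zero_iff _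
      (IsLocalization.injective _ M.primeCompl_le_nonZeroDivisors)).2 hf0)).1 hP
  apply IsDiscreteValuationRing.notMem_maximalIdeal_sq hψf
  rw [← Localization.AtPrime.map_eq_maximalIdeal, ← Ideal.map_pow]
  exact mem_map_of_mem ψ hfM2

theorem Polynomial.isDedekindDomain_of_forall_notMem_sq {R B : Type*} [CommRing R]
    [IsDedekindDomain R] [CommRing B] [IsDomain B] [Algebra R B] [Algebra.IsIntegral R B]
    {π : R[X] →ₐ[R] B} (hπ : Function.Surjective π) {f : R[X]} (hf : π f = 0)
    (h : ∀ M : Ideal R[X], M.IsMaximal → f ∉ M ^ 2) : IsDedekindDomain B := by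
  have : IsNoetherianRing B := isNoetherianRing_of_surjective _ _ (π : R[X] →+* B) hπ
  suffices IsDedekindDomainDvr B from IsDedekindDomainDvr.isDedekindDomain B
  refine ⟨fun p hp0 _ ↦ ?_⟩
  obtain ⟨z, hzp, hz0⟩ := Submodule.exists_mem_ne_zero_of_ne_bot hp0
  have hq : (p.comap (algebraMap R B)).IsMaximal := IsPrime.isMaximal inferInstance
    (comap_ne_bot_of_integral_mem hz0 hzp (Algebra.IsIntegral.isIntegral z))
  have := isMaximal_of_isIntegral_of_isMaximal_comap p hq
  set M := p.comap (π : R[X] →+* B) with hM_def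
  have : M.IsMaximal := comap_isMaximal_of_surjective _ hπ
  have : (M.comap C).IsMaximal := by
    rwa [hM_def, comap_comap, show (π : R[X] →+* B).comp C = algebraMap R B from π.comp_algebraMap]
  obtain ⟨u, hu, v, hv, huv⟩ := exists_le_span_sup_span_sup_sq (M := M)
  have hfM : f ∈ M := by simp [M, hf]
  obtain ⟨w, hw, hM⟩ := exists_le_span_sup_span_sup_sq_of_notMem_sq hu hv huv hfM (h M ‹_›)
  refine isDiscreteValuationRing_localization_of_le_span_sup_sq hp0 (y := π w) hw ?_
  have hMp : M.map π = p := map_comap_of_surjective (π : R[X] →+* B) hπ p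
  calc p = M.map π := hMp.symm
    _ ≤ (span {w} ⊔ span {f} ⊔ M ^ 2).map π := map_mono hM
    _ = span {π w} ⊔ p ^ 2 := by simp [Ideal.map_sup, map_span, Ideal.map_pow, hf, hMp]

theorem uchida_criterion_general
    (R : Type*) [CommRing R] [IsDedekindDomain R]
    (S : Type*) [CommRing S] [IsDomain S] [Algebra R S]
    (hinj : Function.Injective (algebraMap R S))
    (θ : S) (hθ : IsIntegral R θ) :
    IsDedekindDomain ↥(Algebra.adjoin R {θ}) ↔
      ∀ M : Ideal (Polynomial R), M.IsMaximal → minpoly R θ ∉ M ^ 2 := by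
  have : Module.IsTorsionFree R S := Module.isTorsionFree_iff_algebraMap_injective.2 hinj
  have : Algebra.IsIntegral R (Algebra.adjoin R {θ}) :=
    Algebra.IsIntegral.adjoin (by simpa using hθ)
  let π := (minpoly.equivAdjoin hθ).toAlgHom.comp (AdjoinRoot.mkₐ (minpoly R θ))
  have hπ : Function.Surjective π :=
    (minpoly.equivAdjoin hθ).surjective.comp AdjoinRoot.mk_surjective
  have hker : RingHom.ker π.toRingHom = span {minpoly R θ} := by
    ext p
    rw [RingHom.mem_ker, mem_span_singleton, ← AdjoinRoot.mk_eq_zero]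
    exact map_eq_zero_iff _ (minpoly.equivAdjoin hθ).injective
  refine ⟨fun _ M _ ↦ notMem_sq_of_isDedekindDomain (π := π.toRingHom) hπ (minpoly.ne_zero hθ)
    hker M, isDedekindDomain_of_forall_notMem_sq hπ ?_⟩
  simp [π]

/-- **Uchida's theorem (1977).** Let `R` be a Dedekind domain, `S` an integral domain
containing `R`, and `θ ∈ S` integral over `R`, with monic minimal polynomial
`f = minpoly R θ` (whose coefficients lie in `R` since `R` is integrally closed).  Then
`R[θ]` is a Dedekind domain if and only if `f` does not lie in `M²` for any maximal ideal
`M` of `R[t]`. -/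
theorem uchida_criterion
    (R : Type*) [CommRing R] [IsDomain R] [IsDedekindDomain R]
    (S : Type*) [CommRing S] [IsDomain S] [Algebra R S]
    (hinj : Function.Injective (algebraMap R S))
    (θ : S) (hθ : IsIntegral R θ) :
    IsDedekindDomain ↥(Algebra.adjoin R {θ}) ↔
      ∀ M : Ideal (Polynomial R), M.IsMaximal → minpoly R θ ∉ M ^ 2 :=
  uchida_criterion_general R S hinj θ hθ
end

section
/- Let θ be an algebraic integer with minimal polynomial f ∈ ℤ[t], let R = ℤ[θ], let 𝒫 be a maximal ideal of R, and let p be the rational prime with 𝒫 ∩ ℤ = pℤ. Let μ_𝒫 ∈ ℤ[t] be a monic polynomial of least degree such that μ_𝒫(θ) ∈ 𝒫. If there exist g, h ∈ ℤ[t] such that f = μ_𝒫·h + p·g and gcd(μ̄_𝒫, ḡ, h̄) = 1 in 𝔽_p[t], then the localization R_𝒫 of R at 𝒫 is a discrete valuation ring. -/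
/-!
Every element of `ℤ[θ]` is a value `q(θ)`. If `q(θ) ∈ 𝓟`, then so is `r(θ)` for `r = q mod μ`,
and `r ≡ 0 (mod p)`: otherwise the normalised reduction of `r` would lift to a monic
polynomial of degree `< deg μ` whose value lies in `𝓟`. Hence `𝓟 = (μ(θ), p)` and
`q(θ) ∈ 𝓟` forces `μ̄ ∣ q̄`. The gcd condition therefore makes `g(θ)` or `h(θ)` a unit of `R_𝓟`,
and then `μ(θ) h(θ) + p g(θ) = 0` shows that one generator of `𝓟 R_𝓟` divides the other. A
Noetherian local domain that is not a field and has principal maximal ideal is a DVR.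
-/

open Polynomial

namespace Polynomial

theorem C_dvd_iff_map_intCast_eq_zero (n : ℕ) (q : ℤ[X]) :
    C (n : ℤ) ∣ q ↔ q.map (Int.castRingHom (ZMod n)) = 0 := by
  rw [C_dvd_iff_dvd_coeff, Polynomial.ext_iff]
  simp [ZMod.intCast_zmod_eq_zero_iff_dvd]

theorem aeval_adjoin_singleton_surjective {R A : Type*} [CommRing R] [CommRing A] [Algebra R A]
    (x : A) :
    Function.Surjective
      (aeval (⟨x, Algebra.self_mem_adjoin_singleton R x⟩ : Algebra.adjoin R {x}) : R[X] → _) := by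
  rintro ⟨y, hy⟩
  rw [Algebra.adjoin_singleton_eq_range_aeval] at hy
  obtain ⟨q, rfl⟩ := hy
  exact ⟨q, Subtype.ext (Subalgebra.aeval_coe _ _ q).symm⟩

end Polynomial

section MinimalMonic

variable {A : Type*} [CommRing A]

theorem aeval_mem_of_map_intCast_eq {x : A} {P : Ideal A} {p : ℕ} (hp : (p : A) ∈ P)
    {q r : ℤ[X]} (hqr : q.map (Int.castRingHom (ZMod p)) = r.map (Int.castRingHom (ZMod p)))
    (hr : aeval x r ∈ P) : aeval x q ∈ P := by
  obtain ⟨u, hu⟩ := (C_dvd_iff_map_intCast_eq_zero p (q - r)).2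
    (by rw [Polynomial.map_sub, hqr, sub_self])
  rw [sub_eq_iff_eq_add'.mp hu, map_add, map_mul, aeval_C, algebraMap_int_eq, eq_intCast,
    Int.cast_natCast]
  exact P.add_mem hr (P.mul_mem_right _ hp)

structure IsMinimalMonicMod (x : A) (P : Ideal A) (μ : ℤ[X]) : Prop where
  monic : μ.Monic
  aeval_mem : aeval x μ ∈ P
  degree_le : ∀ q : ℤ[X], q.Monic → aeval x q ∈ P → μ.degree ≤ q.degree

namespace IsMinimalMonicMod

variable {x : A} {P : Ideal A} {μ : ℤ[X]} {p : ℕ} [Fact p.Prime]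

theorem map_eq_zero_of_degree_lt (hμ : IsMinimalMonicMod x P μ) (hp : (p : A) ∈ P) {r : ℤ[X]}
    (hdeg : r.degree < μ.degree) (hr : aeval x r ∈ P) :
    r.map (Int.castRingHom (ZMod p)) = 0 := by
  set r' := r.map (Int.castRingHom (ZMod p))
  by_contra hr0
  have hlc : r'.leadingCoeff⁻¹ ≠ 0 := inv_ne_zero (leadingCoeff_ne_zero.mpr hr0)
  obtain ⟨a, ha⟩ := ZMod.intCast_surjective r'.leadingCoeff⁻¹
  have hmonic : (C r'.leadingCoeff⁻¹ * r').Monic :=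
    monic_C_mul_of_mul_leadingCoeff_eq_one (inv_mul_cancel₀ (leadingCoeff_ne_zero.mpr hr0))
  obtain ⟨w, hw, hwdeg, hwmonic⟩ := lifts_and_degree_eq_and_monic
    ((mem_lifts _).2 (map_surjective (Int.castRingHom (ZMod p)) ZMod.intCast_surjective _)) hmonic
  have hwP : aeval x w ∈ P := aeval_mem_of_map_intCast_eq hp (r := C a * r)
    (by rw [hw, Polynomial.map_mul, map_C, eq_intCast, ha])
    (by rw [map_mul]; exact P.mul_mem_left _ hr)
  have hle := hμ.degree_le w hwmonic hwP
  rw [hwdeg, degree_C_mul hlc] at hle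
  exact (hle.trans degree_map_le).not_gt hdeg

theorem exists_eq_mul_add_C_mul (hμ : IsMinimalMonicMod x P μ) (hp : (p : A) ∈ P) {q : ℤ[X]}
    (hq : aeval x q ∈ P) : ∃ s u : ℤ[X], q = μ * s + C (p : ℤ) * u := by
  have hr : aeval x (q %ₘ μ) ∈ P := by
    rw [modByMonic_eq_sub_mul_div q μ, map_sub, map_mul]
    exact P.sub_mem hq (P.mul_mem_right _ hμ.aeval_mem)
  obtain ⟨u, hu⟩ := (C_dvd_iff_map_intCast_eq_zero p _).2
    (hμ.map_eq_zero_of_degree_lt hp (degree_modByMonic_lt q hμ.monic) hr)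
  exact ⟨q /ₘ μ, u, by rw [← hu, add_comm, modByMonic_add_div]⟩

theorem map_dvd_map (hμ : IsMinimalMonicMod x P μ) (hp : (p : A) ∈ P) {q : ℤ[X]}
    (hq : aeval x q ∈ P) :
    μ.map (Int.castRingHom (ZMod p)) ∣ q.map (Int.castRingHom (ZMod p)) := by
  obtain ⟨s, u, rfl⟩ := hμ.exists_eq_mul_add_C_mul hp hq
  exact ⟨s.map (Int.castRingHom (ZMod p)), by simp⟩

theorem eq_span_pair (hμ : IsMinimalMonicMod x P μ) (hp : (p : A) ∈ P)
    (hx : Function.Surjective (aeval x : ℤ[X] → A)) :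
    P = Ideal.span {aeval x μ, (p : A)} := by
  refine le_antisymm (fun y hy => ?_)
    (Ideal.span_le.2 (by simp [Set.insert_subset_iff, hμ.aeval_mem, hp]))
  obtain ⟨q, rfl⟩ := hx y
  obtain ⟨s, u, rfl⟩ := hμ.exists_eq_mul_add_C_mul hp hy
  exact Ideal.mem_span_pair.2 ⟨aeval x s, aeval x u, by simp [mul_comm]⟩

theorem aeval_notMem_or_aeval_notMem (hμ : IsMinimalMonicMod x P μ) (hp : (p : A) ∈ P)
    (hP : P ≠ ⊤) {g h : ℤ[X]}
    (hgcd : IsUnit (EuclideanDomain.gcd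
      (EuclideanDomain.gcd (μ.map (Int.castRingHom (ZMod p))) (g.map (Int.castRingHom (ZMod p))))
      (h.map (Int.castRingHom (ZMod p))))) :
    aeval x g ∉ P ∨ aeval x h ∉ P := by
  by_contra! hgh
  have hunit : IsUnit (μ.map (Int.castRingHom (ZMod p))) := isUnit_of_dvd_unit
    (EuclideanDomain.dvd_gcd (EuclideanDomain.dvd_gcd dvd_rfl (hμ.map_dvd_map hp hgh.1))
      (hμ.map_dvd_map hp hgh.2)) hgcd
  have hμ1 : μ = 1 := hμ.monic.natDegree_eq_zero.mp
    (by rw [← hμ.monic.natDegree_map (Int.castRingHom (ZMod p)),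
      (hμ.monic.map _).eq_one_of_isUnit hunit, natDegree_one])
  exact hP ((Ideal.eq_top_iff_one P).2 (by simpa [hμ1] using hμ.aeval_mem))

end IsMinimalMonicMod

end MinimalMonic

namespace Localization.AtPrime

open IsLocalRing

variable {R : Type*} [CommRing R] {P : Ideal R} [P.IsPrime]

theorem maximalIdeal_eq_span_of_dvd_mul {a b u : R} (hP : P = Ideal.span {a, b}) (hu : u ∉ P)
    (hab : b ∣ a * u) :
    maximalIdeal (Localization.AtPrime P) = Ideal.span {algebraMap R _ b} := by
  have hua : IsUnit (algebraMap R (Localization.AtPrime P) u) :=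
    IsLocalization.map_units _ (⟨u, hu⟩ : P.primeCompl)
  have ha : algebraMap R _ a ∈ Ideal.span {algebraMap R (Localization.AtPrime P) b} :=
    Ideal.mem_span_singleton.2 (hua.dvd_mul_right.1
      (by simpa using _root_.map_dvd (algebraMap R (Localization.AtPrime P)) hab))
  rw [← map_eq_maximalIdeal, congrArg (Ideal.map _) hP, Ideal.map_span, Set.image_pair]
  exact Submodule.span_insert_eq_span ha

theorem isDiscreteValuationRing_of_isPrincipal [IsDomain R] [IsNoetherianRing R] (hP : P ≠ ⊥)
    (h : (maximalIdeal (Localization.AtPrime P)).IsPrincipal) :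
    IsDiscreteValuationRing (Localization.AtPrime P) := by
  have : IsDomain (Localization.AtPrime P) :=
    IsLocalization.isDomain_localization P.primeCompl_le_nonZeroDivisors
  have : IsNoetherianRing (Localization.AtPrime P) :=
    IsLocalization.isNoetherianRing P.primeCompl _ inferInstance
  have hnf : ¬ IsField (Localization.AtPrime P) := by
    rw [isField_iff_maximalIdeal_eq, ← map_eq_maximalIdeal,
      Ideal.map_eq_bot_iff_of_injective
        (IsLocalization.injective _ P.primeCompl_le_nonZeroDivisors)]
    exact hP
  exact ((IsDiscreteValuationRing.TFAE _ hnf).out 0 4).mpr h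

end Localization.AtPrime

/-- **Lüneburg's test (1984).** Let `θ` be an algebraic integer with minimal polynomial `f`,
`R = ℤ[θ]`, `𝓟` a maximal ideal of `R` lying over the rational prime `p`, and `μ_𝓟` a monic
integer polynomial of least degree with `μ_𝓟(θ) ∈ 𝓟`.  If there exist `g, h ∈ ℤ[t]` such that
`f = μ_𝓟 h + p g` and `gcd(μ̄_𝓟, ḡ, h̄) = 1` in `𝔽_p[t]`, then the localization `R_𝓟` is a
discrete valuation ring. -/
theorem luneburg_test
    (θ : ℂ) (hθ : IsIntegral ℤ θ)
    (𝓟 : Ideal (Algebra.adjoin ℤ {θ})) [𝓟.IsMaximal]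
    (p : ℕ) [Fact p.Prime]
    (h𝓟p : 𝓟.comap (algebraMap ℤ (Algebra.adjoin ℤ {θ})) = Ideal.span {(p : ℤ)})
    (μ : ℤ[X]) (hμmonic : μ.Monic)
    (hμ𝓟 : aeval (⟨θ, Algebra.self_mem_adjoin_singleton ℤ θ⟩ : Algebra.adjoin ℤ {θ}) μ ∈ 𝓟)
    (hμmin : ∀ q : ℤ[X], q.Monic →
      aeval (⟨θ, Algebra.self_mem_adjoin_singleton ℤ θ⟩ : Algebra.adjoin ℤ {θ}) q ∈ 𝓟 →
      μ.degree ≤ q.degree)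
    (g h : ℤ[X])
    (hf : minpoly ℤ θ = μ * h + Polynomial.C (p : ℤ) * g)
    (hgcd : IsUnit (EuclideanDomain.gcd
      (EuclideanDomain.gcd (μ.map (Int.castRingHom (ZMod p))) (g.map (Int.castRingHom (ZMod p))))
      (h.map (Int.castRingHom (ZMod p))))) :
    IsDiscreteValuationRing (Localization.AtPrime 𝓟) := by
  set θ' : Algebra.adjoin ℤ {θ} := ⟨θ, Algebra.self_mem_adjoin_singleton ℤ θ⟩
  have hp𝓟 : (p : Algebra.adjoin ℤ {θ}) ∈ 𝓟 := by
    have := Ideal.mem_comap.1 (h𝓟p ▸ Ideal.mem_span_singleton_self (p : ℤ))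
    rwa [algebraMap_int_eq, eq_intCast, Int.cast_natCast] at this
  have hp0 : (p : Algebra.adjoin ℤ {θ}) ≠ 0 := fun h0 =>
    (Fact.out : p.Prime).ne_zero (by exact_mod_cast congrArg Subtype.val h0)
  have hμ : IsMinimalMonicMod θ' 𝓟 μ := ⟨hμmonic, hμ𝓟, hμmin⟩
  have hspan := hμ.eq_span_pair hp𝓟 (aeval_adjoin_singleton_surjective θ)
  have hrel : aeval θ' μ * aeval θ' h + p * aeval θ' g = 0 := by
    have hf0 : aeval θ' (minpoly ℤ θ) = 0 :=
      Subtype.ext ((Subalgebra.aeval_coe _ θ' _).symm.trans (minpoly.aeval ℤ θ))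
    simpa [hf] using hf0
  have : Module.Finite ℤ (Algebra.adjoin ℤ {θ}) :=
    Module.Finite.iff_fg.mpr hθ.fg_adjoin_singleton
  have : IsNoetherianRing (Algebra.adjoin ℤ {θ}) := Algebra.FiniteType.isNoetherianRing ℤ _
  refine Localization.AtPrime.isDiscreteValuationRing_of_isPrincipal
    (fun h𝓟 => hp0 (by simpa [h𝓟] using hp𝓟)) ?_
  rcases hμ.aeval_notMem_or_aeval_notMem hp𝓟 Ideal.IsPrime.ne_top' hgcd with hg | hh
  · have hspan' : 𝓟 = Ideal.span {(p : Algebra.adjoin ℤ {θ}), aeval θ' μ} := by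
      rw [hspan, Set.pair_comm]
    exact ⟨⟨_, Localization.AtPrime.maximalIdeal_eq_span_of_dvd_mul hspan' hg
      ⟨-aeval θ' h, by linear_combination hrel⟩⟩⟩
  · exact ⟨⟨_, Localization.AtPrime.maximalIdeal_eq_span_of_dvd_mul hspan hh
      ⟨-aeval θ' g, by linear_combination hrel⟩⟩⟩
end

section
/- Let θ be an algebraic integer with minimal polynomial f ∈ ℤ[t], let R = ℤ[θ], let 𝒫 be a maximal ideal of R, and let p be the rational prime with 𝒫 ∩ ℤ = pℤ. Let μ_𝒫 ∈ ℤ[t] be a monic polynomial of least degree such that μ_𝒫(θ) ∈ 𝒫. The following statements are equivalent: (1) the localization R_𝒫 is a discrete valuation ring; (2) for every g, h ∈ ℤ[t] such that f = μ_𝒫·h + p·g, one has gcd(μ̄_𝒫, ḡ, h̄) = 1 in 𝔽_p[t]; (3) there exist g, h ∈ ℤ[t] such that f = μ_𝒫·h + p·g and gcd(μ̄_𝒫, ḡ, h̄) = 1 in 𝔽_p[t]; (4) f does not lie in the square of the ideal (p, μ_𝒫(t)) of ℤ[t]. -/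
/-!
Minimality of `μ` forces every element of `𝓟` to reduce modulo `p` to a multiple of `μ̄`
(a monic lift of a smaller-degree element would contradict minimality), so `𝓟` pulls back to
`M = (p, μ)` in `ℤ[t]`, and `μ̄` is irreducible because `M` is prime. As `ℤ[θ] = ℤ[t]/(f)`, the
maximal ideal of `R_𝓟` is generated by `p` and `μ(θ)`; in a local ring such an ideal is principal
iff one generator divides the other, i.e. iff `a p + b μ(θ) = 0` in `R` for some `a, b` not both
in `𝓟`. A lift of such a relation is a multiple of `f`, and since `p` and `μ` stay independent
modulo `M²`, such a relation exists iff `f ∉ M²`. Finally, for `f = μ h + p g` we have `f ∈ M²`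
iff `μ̄` divides `ḡ` and `h̄`, which for irreducible `μ̄` says that `gcd(μ̄, ḡ, h̄) ≠ 1`.
-/

open Polynomial

namespace Luneburg

theorem ker_map_intCastRingHom (n : ℕ) :
    RingHom.ker (mapRingHom (Int.castRingHom (ZMod n))) = Ideal.span {C (n : ℤ)} := by
  rw [ker_mapRingHom, ZMod.ker_intCastRingHom, Ideal.map_span, Set.image_singleton]

theorem span_C_natCast_pair_eq_comap (n : ℕ) (μ : ℤ[X]) :
    Ideal.span {C (n : ℤ), μ} = (Ideal.span {μ.map (Int.castRingHom (ZMod n))}).comap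
      (mapRingHom (Int.castRingHom (ZMod n))) := by
  have hsurj := map_surjective _ (ZMod.ringHom_surjective (Int.castRingHom (ZMod n)))
  rw [← Set.image_singleton, ← coe_mapRingHom, ← Ideal.map_span,
    Ideal.comap_map_of_surjective' _ hsurj, ker_map_intCastRingHom, sup_comm, ← Ideal.span_insert]

theorem mem_span_C_natCast_pair_iff (n : ℕ) (μ q : ℤ[X]) :
    q ∈ Ideal.span {C (n : ℤ), μ} ↔
      μ.map (Int.castRingHom (ZMod n)) ∣ q.map (Int.castRingHom (ZMod n)) := by
  rw [span_C_natCast_pair_eq_comap, Ideal.mem_comap, Ideal.mem_span_singleton, coe_mapRingHom]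

theorem _root_.Polynomial.Monic.dvd_of_dvd_C_mul {R : Type*} [CommRing R] [IsDomain R]
    {μ q : R[X]} {c : R} (hμ : μ.Monic) (hc : c ≠ 0) (h : μ ∣ C c * q) : μ ∣ q := by
  rw [← modByMonic_eq_zero_iff_dvd hμ, ← smul_eq_C_mul, smul_modByMonic, smul_eq_zero] at h
  exact (modByMonic_eq_zero_iff_dvd hμ).mp (h.resolve_left hc)

theorem mul_add_mul_mem_span_C_pair_sq_iff {R : Type*} [CommRing R] [IsDomain R]
    {c : R} (hc : c ≠ 0) {μ : R[X]} (hμ : μ.Monic) (a b : R[X]) :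
    C c * a + μ * b ∈ Ideal.span {C c, μ} ^ 2 ↔
      a ∈ Ideal.span {C c, μ} ∧ b ∈ Ideal.span {C c, μ} := by
  set M := Ideal.span {C c, μ}
  have hsq : M ^ 2 = Ideal.span {C c} * M ⊔ Ideal.span {μ} * M := by
    rw [pow_two, ← Ideal.sup_mul, ← Ideal.span_insert]
  constructor
  · rw [hsq, Submodule.mem_sup]
    rintro ⟨_, hcu, _, hμv, huv⟩
    obtain ⟨u, hu, rfl⟩ := Ideal.mem_span_singleton_mul.mp hcu
    obtain ⟨v, hv, rfl⟩ := Ideal.mem_span_singleton_mul.mp hμv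
    obtain ⟨k, hk⟩ : μ ∣ a - u := hμ.dvd_of_dvd_C_mul hc ⟨v - b, by linear_combination -huv⟩
    have hbv : b = v - C c * k := by
      refine mul_left_cancel₀ hμ.ne_zero ?_
      linear_combination -huv - C c * hk
    refine ⟨?_, ?_⟩
    · rw [show a = u + μ * k by linear_combination hk]
      exact M.add_mem hu (M.mul_mem_right _ (Ideal.subset_span (by simp)))
    · rw [hbv]
      exact M.sub_mem hv (M.mul_mem_right _ (Ideal.subset_span (by simp)))
  · rintro ⟨ha, hb⟩
    rw [pow_two]
    exact Ideal.add_mem _ (Ideal.mul_mem_mul (Ideal.subset_span (by simp)) ha)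
      (Ideal.mul_mem_mul (Ideal.subset_span (by simp)) hb)

section MinimalMonic

variable {p : ℕ} [Fact p.Prime] {J : Ideal ℤ[X]} {μ : ℤ[X]}

theorem map_eq_zero_of_mem_of_degree_lt (hpJ : C (p : ℤ) ∈ J)
    (hmin : ∀ q : ℤ[X], q.Monic → q ∈ J → μ.degree ≤ q.degree)
    {r : ℤ[X]} (hr : r ∈ J) (hdeg : r.degree < μ.degree) :
    r.map (Int.castRingHom (ZMod p)) = 0 := by
  set red := Int.castRingHom (ZMod p)
  have hsurj : Function.Surjective red := ZMod.ringHom_surjective red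
  by_contra hr0
  obtain ⟨c, hc⟩ := hsurj (r.map red).leadingCoeff⁻¹
  obtain ⟨q, hqr, hqdeg, hq⟩ := lifts_and_degree_eq_and_monic
    (map_surjective red hsurj _) (monic_mul_leadingCoeff_inv hr0)
  -- `q ≡ c r` modulo `p`
  have hqJ : q ∈ J := by
    have hker : q - C c * r ∈ RingHom.ker (mapRingHom red) := by
      rw [RingHom.mem_ker, coe_mapRingHom, Polynomial.map_sub, Polynomial.map_mul, map_C, hc,
        hqr, mul_comm, sub_self]
    rw [ker_map_intCastRingHom] at hker
    simpa using
      J.add_mem ((Ideal.span_singleton_le_iff_mem J).mpr hpJ hker) (J.mul_mem_left (C c) hr)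
  have := calc μ.degree ≤ q.degree := hmin q hq hqJ
    _ = (r.map red).degree := by
      rw [hqdeg, degree_mul, degree_C (inv_ne_zero (leadingCoeff_ne_zero.mpr hr0)), add_zero]
    _ ≤ r.degree := degree_map_le
  exact (this.trans_lt hdeg).false

theorem eq_span_C_natCast_pair_of_minimal (hpJ : C (p : ℤ) ∈ J) (hμJ : μ ∈ J) (hμ : μ.Monic)
    (hmin : ∀ q : ℤ[X], q.Monic → q ∈ J → μ.degree ≤ q.degree) :
    J = Ideal.span {C (p : ℤ), μ} := by
  refine le_antisymm (fun q hq => ?_) ?_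
  · have hrJ : q %ₘ μ ∈ J := by
      rw [modByMonic_eq_sub_mul_div q μ]
      exact J.sub_mem hq (J.mul_mem_right _ hμJ)
    have hr := map_eq_zero_of_mem_of_degree_lt hpJ hmin hrJ (degree_modByMonic_lt q hμ)
    rw [mem_span_C_natCast_pair_iff, ← modByMonic_add_div q μ, Polynomial.map_add, hr, zero_add,
      Polynomial.map_mul]
    exact dvd_mul_right _ _
  · rw [Ideal.span_le, Set.insert_subset_iff, Set.singleton_subset_iff]
    exact ⟨hpJ, hμJ⟩

end MinimalMonic

theorem irreducible_map_of_isPrime_span (p : ℕ) [Fact p.Prime] {μ : ℤ[X]} (hμ : μ.Monic)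
    (hprime : (Ideal.span {C (p : ℤ), μ}).IsPrime) :
    Irreducible (μ.map (Int.castRingHom (ZMod p))) := by
  have hsurj := map_surjective _ (ZMod.ringHom_surjective (Int.castRingHom (ZMod p)))
  have := Ideal.map_isPrime_of_surjective (f := mapRingHom (Int.castRingHom (ZMod p))) hsurj
    (I := Ideal.span {C (p : ℤ), μ})
    (by rw [ker_map_intCastRingHom]; exact Ideal.span_mono (by simp))
  rw [span_C_natCast_pair_eq_comap, Ideal.map_comap_of_surjective _ hsurj,
    Ideal.span_singleton_prime (hμ.map _).ne_zero] at this
  exact this.irreducible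

theorem _root_.Irreducible.isUnit_gcd_gcd_iff {R : Type*} [EuclideanDomain R] [DecidableEq R]
    {m : R} (hm : Irreducible m) (a b : R) :
    IsUnit (EuclideanDomain.gcd (EuclideanDomain.gcd m a) b) ↔ ¬(m ∣ a ∧ m ∣ b) := by
  set d := EuclideanDomain.gcd (EuclideanDomain.gcd m a) b
  have hda : d ∣ a :=
    (EuclideanDomain.gcd_dvd_left _ _).trans (EuclideanDomain.gcd_dvd_right _ _)
  have hdb : d ∣ b := EuclideanDomain.gcd_dvd_right _ _
  obtain ⟨e, he⟩ : d ∣ m :=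
    (EuclideanDomain.gcd_dvd_left _ _).trans (EuclideanDomain.gcd_dvd_left _ _)
  constructor
  · rintro hd ⟨ha, hb⟩
    exact hm.not_isUnit (isUnit_of_dvd_unit
      (EuclideanDomain.dvd_gcd (EuclideanDomain.dvd_gcd dvd_rfl ha) hb) hd)
  · intro hn
    refine (hm.isUnit_or_isUnit he).resolve_right fun he_unit => hn ?_
    have hmd : m ∣ d := ⟨↑he_unit.unit⁻¹, by rw [he, mul_assoc, he_unit.mul_val_inv, mul_one]⟩
    exact ⟨hmd.trans hda, hmd.trans hdb⟩

theorem isUnit_gcd_map_iff_notMem_sq (p : ℕ) [Fact p.Prime] {μ f g h : ℤ[X]} (hμ : μ.Monic)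
    (hprime : (Ideal.span {C (p : ℤ), μ}).IsPrime) (hf : f = μ * h + C (p : ℤ) * g) :
    IsUnit (EuclideanDomain.gcd
        (EuclideanDomain.gcd (μ.map (Int.castRingHom (ZMod p))) (g.map (Int.castRingHom (ZMod p))))
        (h.map (Int.castRingHom (ZMod p)))) ↔
      f ∉ Ideal.span {C (p : ℤ), μ} ^ 2 := by
  have hp0 : (p : ℤ) ≠ 0 := Int.natCast_ne_zero.mpr (Fact.out : p.Prime).ne_zero
  rw [(irreducible_map_of_isPrime_span p hμ hprime).isUnit_gcd_gcd_iff, hf, add_comm,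
    mul_add_mul_mem_span_C_pair_sq_iff hp0 hμ, mem_span_C_natCast_pair_iff,
    mem_span_C_natCast_pair_iff]

theorem _root_.IsLocalRing.isPrincipal_span_pair_iff {L : Type*} [CommRing L] [IsLocalRing L]
    (x y : L) :
    (Ideal.span {x, y}).IsPrincipal ↔ x ∈ Ideal.span {y} ∨ y ∈ Ideal.span {x} := by
  constructor
  · rintro ⟨z, hz⟩
    rw [Ideal.submodule_span_eq] at hz
    obtain ⟨s, hs⟩ := Ideal.mem_span_singleton'.mp (hz ▸ Ideal.subset_span (by simp) : x ∈ _)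
    obtain ⟨t, ht⟩ := Ideal.mem_span_singleton'.mp (hz ▸ Ideal.subset_span (by simp) : y ∈ _)
    obtain ⟨u, v, huv⟩ := Ideal.mem_span_pair.mp (hz ▸ Ideal.mem_span_singleton_self z)
    -- either `z = 0`, or `u s + v t` is a unit and hence so is `s` or `t`
    have hz0 : (1 - (u * s + v * t)) * z = 0 := by linear_combination -huv - u * hs - v * ht
    by_cases hunit : IsUnit (u * s + v * t)
    · rcases IsLocalRing.isUnit_or_isUnit_of_isUnit_add hunit with hu | hv
      · right
        rw [Ideal.mem_span_singleton', ← ht]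
        exact ⟨t * ↑(isUnit_of_mul_isUnit_right hu).unit⁻¹, by
          rw [← hs, mul_assoc, ← mul_assoc _ s, IsUnit.val_inv_mul, one_mul]⟩
      · left
        rw [Ideal.mem_span_singleton', ← hs]
        exact ⟨s * ↑(isUnit_of_mul_isUnit_right hv).unit⁻¹, by
          rw [← ht, mul_assoc, ← mul_assoc _ t, IsUnit.val_inv_mul, one_mul]⟩
    · rw [(IsLocalRing.isUnit_one_sub_self_of_mem_nonunits _ hunit).mul_right_eq_zero] at hz0
      left
      rw [← hs, hz0, mul_zero]
      exact Ideal.zero_mem _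
  · rintro (h | h)
    · exact ⟨y, Submodule.span_insert_eq_span h⟩
    · exact ⟨x, Set.pair_comm x y ▸ Submodule.span_insert_eq_span h⟩

section AtPrime

variable {R : Type*} [CommRing R] (P : Ideal R) [P.IsPrime]

theorem algebraMap_mem_span_singleton_atPrime_iff (x y : R) :
    algebraMap R (Localization.AtPrime P) x ∈ Ideal.span {algebraMap R _ y} ↔
      ∃ a b : R, a * x + b * y = 0 ∧ a ∉ P := by
  constructor
  · rw [← Set.image_singleton, ← Ideal.map_span,
      IsLocalization.mem_map_algebraMap_iff P.primeCompl]
    rintro ⟨⟨⟨_, hi⟩, ⟨s, hs⟩⟩, hxs⟩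
    obtain ⟨r, rfl⟩ := Ideal.mem_span_singleton'.mp hi
    rw [← map_mul, IsLocalization.eq_iff_exists P.primeCompl] at hxs
    obtain ⟨⟨c, hc⟩, hcxs⟩ := hxs
    exact ⟨c * s, -(c * r), by linear_combination hcxs, P.primeCompl.mul_mem hc hs⟩
  · rintro ⟨a, b, hab, ha⟩
    obtain ⟨u, hu⟩ :=
      (IsLocalization.AtPrime.isUnit_to_map_iff (Localization.AtPrime P) P a).mpr ha
    refine Ideal.mem_span_singleton'.mpr ⟨-(↑u⁻¹ * algebraMap R _ b), ?_⟩
    have := congrArg (algebraMap R (Localization.AtPrime P)) hab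
    rw [map_add, map_mul, map_mul, map_zero, ← hu] at this
    linear_combination -(↑u⁻¹ : Localization.AtPrime P) * this + algebraMap R _ x * u.inv_mul

theorem isPrincipal_span_pair_atPrime_iff (x y : R) :
    (Ideal.span {algebraMap R (Localization.AtPrime P) x, algebraMap R _ y}).IsPrincipal ↔
      ∃ a b : R, a * x + b * y = 0 ∧ (a ∉ P ∨ b ∉ P) := by
  rw [IsLocalRing.isPrincipal_span_pair_iff, algebraMap_mem_span_singleton_atPrime_iff,
    algebraMap_mem_span_singleton_atPrime_iff]
  constructor
  · rintro (⟨a, b, hab, ha⟩ | ⟨b, a, hba, hb⟩)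
    · exact ⟨a, b, hab, .inl ha⟩
    · exact ⟨a, b, by linear_combination hba, .inr hb⟩
  · rintro ⟨a, b, hab, ha | hb⟩
    · exact .inl ⟨a, b, hab, ha⟩
    · exact .inr ⟨b, a, by linear_combination hab, hb⟩

theorem not_isField_localization_atPrime [IsDomain R] (hP : P ≠ ⊥) :
    ¬IsField (Localization.AtPrime P) := by
  rwa [IsLocalRing.isField_iff_maximalIdeal_eq, ← Localization.AtPrime.map_eq_maximalIdeal,
    Ideal.map_eq_bot_iff_of_injective (IsLocalization.injective _ P.primeCompl_le_nonZeroDivisors)]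

end AtPrime

section Presentation

variable {S R F : Type*} [CommRing S] [CommRing R] [FunLike F S R] [RingHomClass F S R] {φ : F}
  {f x y : S}

theorem exists_relation_notMem_iff_notMem_sq (hφ : Function.Surjective φ)
    (hker : RingHom.ker φ = Ideal.span {f}) {P : Ideal R} (hP : P.comap φ = Ideal.span {x, y})
    (hsq : ∀ a b, x * a + y * b ∈ Ideal.span {x, y} ^ 2 ↔
      a ∈ Ideal.span {x, y} ∧ b ∈ Ideal.span {x, y}) :
    (∃ a b : R, a * φ x + b * φ y = 0 ∧ (a ∉ P ∨ b ∉ P)) ↔ f ∉ Ideal.span {x, y} ^ 2 := by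
  have hmem : ∀ a, φ a ∈ P ↔ a ∈ Ideal.span {x, y} := fun a => by rw [← hP, Ideal.mem_comap]
  have hf0 : φ f = 0 := RingHom.mem_ker.mp (hker ▸ Ideal.mem_span_singleton_self f)
  constructor
  · rintro ⟨a, b, hab, hout⟩ hf
    obtain ⟨A, rfl⟩ := hφ a
    obtain ⟨B, rfl⟩ := hφ b
    have hrel : x * A + y * B ∈ Ideal.span {f} := by
      rw [← hker, RingHom.mem_ker, map_add, map_mul, map_mul]
      linear_combination hab
    rw [hmem, hmem, ← not_and_or, ← hsq] at hout
    exact hout ((Ideal.span_singleton_le_iff_mem _).mpr hf hrel)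
  · intro hf
    have hfM : f ∈ Ideal.span {x, y} := by
      rw [← hmem, hf0]
      exact P.zero_mem
    obtain ⟨a, b, rfl⟩ := Ideal.mem_span_pair.mp hfM
    refine ⟨φ a, φ b, by simpa using hf0, ?_⟩
    rwa [hmem, hmem, ← not_and_or, ← hsq, mul_comm x, mul_comm y]

theorem isDiscreteValuationRing_atPrime_iff_notMem_sq [IsNoetherianRing S] [IsDomain R]
    (hφ : Function.Surjective φ) (hker : RingHom.ker φ = Ideal.span {f})
    (P : Ideal R) [P.IsPrime] (hP0 : P ≠ ⊥) (hP : P.comap φ = Ideal.span {x, y})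
    (hsq : ∀ a b, x * a + y * b ∈ Ideal.span {x, y} ^ 2 ↔
      a ∈ Ideal.span {x, y} ∧ b ∈ Ideal.span {x, y}) :
    IsDiscreteValuationRing (Localization.AtPrime P) ↔ f ∉ Ideal.span {x, y} ^ 2 := by
  have : IsNoetherianRing R := isNoetherianRing_of_surjective S R φ hφ
  have hmax : IsLocalRing.maximalIdeal (Localization.AtPrime P) =
      Ideal.span {algebraMap R _ (φ x), algebraMap R _ (φ y)} := by
    rw [← Localization.AtPrime.map_eq_maximalIdeal, ← Set.image_pair, ← Ideal.map_span,
      ← Set.image_pair, ← Ideal.map_span, ← hP, Ideal.map_comap_of_surjective _ hφ]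
  rw [((IsDiscreteValuationRing.TFAE _ (not_isField_localization_atPrime P hP0)).out 0 4 :),
    hmax, isPrincipal_span_pair_atPrime_iff]
  exact exists_relation_notMem_iff_notMem_sq hφ hker hP hsq

end Presentation

section Adjoin

variable {R A : Type*} [CommRing R] [CommRing A] [Algebra R A]

theorem aeval_adjoin_self_surjective (x : A) :
    Function.Surjective
      (aeval (R := R) (⟨x, Algebra.self_mem_adjoin_singleton R x⟩ : Algebra.adjoin R {x})) := by
  rintro ⟨y, hy⟩
  rw [Algebra.adjoin_singleton_eq_range_aeval] at hy
  obtain ⟨q, rfl⟩ := hy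
  exact ⟨q, Subtype.ext (aeval_subalgebra_coe q _ _)⟩

theorem ker_aeval_adjoin_self [IsDomain R] [IsIntegrallyClosed R] [IsDomain A]
    [Module.IsTorsionFree R A] {x : A} (hx : IsIntegral R x) :
    RingHom.ker
        (aeval (R := R) (⟨x, Algebra.self_mem_adjoin_singleton R x⟩ : Algebra.adjoin R {x})) =
      Ideal.span {minpoly R x} := by
  ext q
  rw [RingHom.mem_ker, Ideal.mem_span_singleton, ← minpoly.isIntegrallyClosed_dvd_iff hx,
    ← Subtype.coe_inj, aeval_subalgebra_coe]
  rfl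

end Adjoin

end Luneburg

open Luneburg in
/-- **Local version of Uchida's theorem via Lüneburg's criterion.**  Let `θ` be an algebraic
integer with minimal polynomial `f`, `R = ℤ[θ]`, `𝓟` a maximal ideal of `R` lying over the
rational prime `p`, and `μ_𝓟` a monic integer polynomial of least degree with `μ_𝓟(θ) ∈ 𝓟`.
The following are equivalent:
1. the localization `R_𝓟` is a discrete valuation ring;
2. for every `g, h` with `f = μ_𝓟 h + p g` one has `gcd(μ̄_𝓟, ḡ, h̄) = 1` in `𝔽_p[t]`;
3. there exist `g, h` with `f = μ_𝓟 h + p g` and `gcd(μ̄_𝓟, ḡ, h̄) = 1` in `𝔽_p[t]`;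
4. `f ∉ (p, μ_𝓟(t))²` in `ℤ[t]`. -/
theorem luneburg_tfae
    (θ : ℂ) (hθ : IsIntegral ℤ θ)
    (𝓟 : Ideal (Algebra.adjoin ℤ {θ})) [𝓟.IsMaximal]
    (p : ℕ) [Fact p.Prime]
    (h𝓟p : 𝓟.comap (algebraMap ℤ (Algebra.adjoin ℤ {θ})) = Ideal.span {(p : ℤ)})
    (μ : ℤ[X]) (hμmonic : μ.Monic)
    (hμ𝓟 : aeval (⟨θ, Algebra.self_mem_adjoin_singleton ℤ θ⟩ : Algebra.adjoin ℤ {θ}) μ ∈ 𝓟)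
    (hμmin : ∀ q : ℤ[X], q.Monic →
      aeval (⟨θ, Algebra.self_mem_adjoin_singleton ℤ θ⟩ : Algebra.adjoin ℤ {θ}) q ∈ 𝓟 →
      μ.degree ≤ q.degree) :
    [IsDiscreteValuationRing (Localization.AtPrime 𝓟),
      ∀ g h : ℤ[X], minpoly ℤ θ = μ * h + Polynomial.C (p : ℤ) * g →
        IsUnit (EuclideanDomain.gcd
          (EuclideanDomain.gcd (μ.map (Int.castRingHom (ZMod p)))
            (g.map (Int.castRingHom (ZMod p))))
          (h.map (Int.castRingHom (ZMod p)))),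
      ∃ g h : ℤ[X], minpoly ℤ θ = μ * h + Polynomial.C (p : ℤ) * g ∧
        IsUnit (EuclideanDomain.gcd
          (EuclideanDomain.gcd (μ.map (Int.castRingHom (ZMod p)))
            (g.map (Int.castRingHom (ZMod p))))
          (h.map (Int.castRingHom (ZMod p)))),
      minpoly ℤ θ ∉ (Ideal.span {Polynomial.C (p : ℤ), μ}) ^ 2].TFAE := by
  set θ' : Algebra.adjoin ℤ {θ} := ⟨θ, Algebra.self_mem_adjoin_singleton ℤ θ⟩
  have hp0 : (p : ℤ) ≠ 0 := Int.natCast_ne_zero.mpr (Fact.out : p.Prime).ne_zero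
  have hpP : aeval θ' (C (p : ℤ)) ∈ 𝓟 := by
    rw [aeval_C, ← Ideal.mem_comap, h𝓟p]
    exact Ideal.mem_span_singleton_self _
  have hM : 𝓟.comap (aeval θ') = Ideal.span {C (p : ℤ), μ} :=
    eq_span_C_natCast_pair_of_minimal hpP hμ𝓟 hμmonic hμmin
  have hker := ker_aeval_adjoin_self hθ
  have hprime : (Ideal.span {C (p : ℤ), μ}).IsPrime := hM ▸ Ideal.comap_isPrime (aeval θ') 𝓟
  have hgcd {g h : ℤ[X]} (hf : minpoly ℤ θ = μ * h + C (p : ℤ) * g) :=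
    isUnit_gcd_map_iff_notMem_sq p hμmonic hprime hf
  obtain ⟨g, h, hf⟩ : ∃ g h : ℤ[X], minpoly ℤ θ = μ * h + C (p : ℤ) * g := by
    obtain ⟨g, h, hgh⟩ := Ideal.mem_span_pair.mp <|
      hM ▸ Ideal.comap_mono bot_le (hker ▸ Ideal.mem_span_singleton_self (minpoly ℤ θ))
    exact ⟨g, h, by rw [← hgh]; ring⟩
  have hP0 : 𝓟 ≠ ⊥ := Submodule.ne_bot_iff _ |>.mpr ⟨_, hpP, by simpa using hp0⟩
  tfae_have 1 ↔ 4 := isDiscreteValuationRing_atPrime_iff_notMem_sq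
    (aeval_adjoin_self_surjective θ) hker 𝓟 hP0 hM
    (mul_add_mul_mem_span_C_pair_sq_iff hp0 hμmonic)
  tfae_have 2 ↔ 4 := ⟨fun h2 => (hgcd hf).mp (h2 g h hf), fun h4 g h hf => (hgcd hf).mpr h4⟩
  tfae_have 3 ↔ 4 :=
    ⟨fun ⟨g, h, hf, hu⟩ => (hgcd hf).mp hu, fun h4 => ⟨g, h, hf, (hgcd hf).mpr h4⟩⟩
  tfae_finish
end

section
/- Let θ be an algebraic integer with minimal polynomial f ∈ ℤ[t], let R = ℤ[θ], and let p be a rational prime. For any F ∈ ℤ[t] such that the reduction F̄ is irreducible in 𝔽_p[t] and F̄ divides f̄, the ideal pR + F(θ)R of R is a prime ideal. -/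
open Polynomial

/-! The ideal `(p, F)` of `ℤ[X]` is the kernel of `ℤ[X] → 𝔽_p[X] → 𝔽_p[X]/(F̄)`, a map onto a
field, so it is prime. It contains the minimal polynomial `f` of `θ` because `F̄ ∣ f̄`, hence it
contains the kernel `(f)` of `ℤ[X] ↠ ℤ[θ]`, and its image `(p, F(θ))` in `ℤ[θ]` is again prime. -/

theorem AdjoinRoot.ker_mk_map_comp_mapRingHom {R S : Type*} [CommRing R] [CommRing S]
    {φ : R →+* S} (hφ : Function.Surjective φ) {r : R} (hr : RingHom.ker φ = Ideal.span {r})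
    (G : R[X]) :
    RingHom.ker ((AdjoinRoot.mk (G.map φ)).comp (mapRingHom φ)) = Ideal.span {C r, G} := by
  ext g
  have hker : RingHom.ker (mapRingHom φ) = Ideal.span {C r} := by
    rw [ker_mapRingHom, hr, Ideal.map_span, Set.image_singleton]
  calc g ∈ RingHom.ker ((AdjoinRoot.mk (G.map φ)).comp (mapRingHom φ))
      ↔ ∃ h : R[X], g.map φ = G.map φ * h.map φ := by
        rw [RingHom.mem_ker, RingHom.comp_apply, coe_mapRingHom, AdjoinRoot.mk_eq_zero]
        exact (map_surjective φ hφ).exists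
    _ ↔ ∃ h : R[X], g - G * h ∈ Ideal.span {C r} := by
        simp only [← hker, RingHom.mem_ker, coe_mapRingHom, Polynomial.map_sub,
          Polynomial.map_mul, sub_eq_zero]
    _ ↔ g ∈ Ideal.span {C r, G} := by
        simp only [Ideal.mem_span_singleton', Ideal.mem_span_pair]
        constructor
        · rintro ⟨h, q, hq⟩
          exact ⟨q, h, by linear_combination hq⟩
        · rintro ⟨q, h, hg⟩
          exact ⟨h, q, by linear_combination hg⟩

theorem Polynomial.isPrime_span_C_of_irreducible_map {R K : Type*} [CommRing R] [Field K]
    {φ : R →+* K} (hφ : Function.Surjective φ) {r : R} (hr : RingHom.ker φ = Ideal.span {r})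
    {G : R[X]} (hG : Irreducible (G.map φ)) : (Ideal.span {C r, G}).IsPrime := by
  have := Fact.mk hG
  rw [← AdjoinRoot.ker_mk_map_comp_mapRingHom hφ hr]
  exact RingHom.ker_isPrime _

section AdjoinSingleton

variable {R S : Type*} [CommRing R] [CommRing S] [Algebra R S]

theorem Polynomial.aeval_adjoin_singleton_surjective_s6 (x : S) :
    Function.Surjective
      (aeval (R := R) (⟨x, Algebra.self_mem_adjoin_singleton R x⟩ : Algebra.adjoin R {x})) := by
  have : (AdjoinRoot.Minpoly.toAdjoin R x).comp (AdjoinRoot.mkₐ (minpoly R x)) =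
      aeval (⟨x, Algebra.self_mem_adjoin_singleton R x⟩ : Algebra.adjoin R {x}) := by
    ext; simp
  rw [← this]
  exact (AdjoinRoot.Minpoly.toAdjoin.surjective R x).comp AdjoinRoot.mk_surjective

theorem Polynomial.ker_aeval_adjoin_singleton [IsDomain R] [IsIntegrallyClosed R] [IsDomain S]
    [Module.IsTorsionFree R S] {x : S} (hx : IsIntegral R x) :
    RingHom.ker
      (aeval (R := R) (⟨x, Algebra.self_mem_adjoin_singleton R x⟩ : Algebra.adjoin R {x})) =
      Ideal.span {minpoly R x} := by
  rw [← minpoly.ker_eval hx]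
  ext g
  simp only [RingHom.mem_ker, AlgHom.toRingHom_eq_coe, AlgHom.coe_toRingHom,
    ← Subalgebra.coe_eq_zero, aeval_subalgebra_coe]

end AdjoinSingleton

/-- Let `θ` be an algebraic integer with minimal polynomial `f`, `R = ℤ[θ]`, and `p` a
rational prime.  For any `F ∈ ℤ[t]` such that the reduction `F̄` is irreducible in `𝔽_p[t]`
and `F̄` divides `f̄`, the ideal `p R + F(θ) R` of `R` is prime. -/
theorem span_p_F_theta_isPrime
    (θ : ℂ) (hθ : IsIntegral ℤ θ)
    (p : ℕ) [Fact p.Prime]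
    (F : ℤ[X])
    (hFirr : Irreducible (F.map (Int.castRingHom (ZMod p))))
    (hFdvd : F.map (Int.castRingHom (ZMod p)) ∣
      (minpoly ℤ θ).map (Int.castRingHom (ZMod p))) :
    (Ideal.span {((p : ℕ) : Algebra.adjoin ℤ {θ}),
      aeval (⟨θ, Algebra.self_mem_adjoin_singleton ℤ θ⟩ : Algebra.adjoin ℤ {θ}) F}).IsPrime := by
  have hφ := ZMod.intCast_surjective (n := p)
  have hker := ZMod.ker_intCastRingHom p
  have hprime := isPrime_span_C_of_irreducible_map hφ hker hFirr
  have hminpoly : minpoly ℤ θ ∈ Ideal.span {C (p : ℤ), F} := by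
    rw [← AdjoinRoot.ker_mk_map_comp_mapRingHom hφ hker, RingHom.mem_ker, RingHom.comp_apply,
      coe_mapRingHom, AdjoinRoot.mk_eq_zero]
    exact hFdvd
  have hle := (ker_aeval_adjoin_singleton hθ).trans_le
    ((Ideal.span_singleton_le_iff_mem _).mpr hminpoly)
  have := Ideal.map_isPrime_of_surjective (aeval_adjoin_singleton_surjective_s6 θ) hle
  simpa only [map_natCast, Ideal.map_span, Set.image_pair] using this
end

section
/- Let θ be an algebraic integer, let R = ℤ[θ], let 𝒫 be a maximal ideal of R, and let p be the rational prime with 𝒫 ∩ ℤ = pℤ. Let μ_𝒫 ∈ ℤ[t] be a monic polynomial of least degree such that μ_𝒫(θ) ∈ 𝒫. Then pR + μ_𝒫(θ)R = 𝒫. -/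
open Polynomial

/-!
Write `x ∈ 𝓟` as `f(θ)` and divide `f` by the monic `μ`: `x ≡ r(θ) (mod μ(θ))` with
`deg r < deg μ` and `r(θ) ∈ 𝓟`. If `r` were nonzero mod `p`, rescaling it by the inverse of its
leading coefficient mod `p` and lifting back to `ℤ[t]` would give a monic `q` of degree `< deg μ`
with `q(θ) ∈ 𝓟` (since `p ∈ 𝓟`), contradicting minimality. Hence `p ∣ r` and `r(θ) ∈ pR`.
-/

theorem Algebra.aeval_adjoin_singleton_surjective {R A : Type*} [CommRing R] [CommRing A]
    [Algebra R A] (x : A) :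
    Function.Surjective
      (aeval (⟨x, Algebra.self_mem_adjoin_singleton R x⟩ : Algebra.adjoin R {x}) : R[X] → _) := by
  intro y
  obtain ⟨f, hf⟩ := Algebra.adjoin_eq_exists_aeval R x y
  exact ⟨f, Subtype.ext (by rw [aeval_subalgebra_coe]; exact hf)⟩

namespace Polynomial

theorem aeval_mem_span_natCast_of_map_eq_zero {S : Type*} [CommRing S] {n : ℕ} (a : S)
    {g : ℤ[X]} (hg : g.map (Int.castRingHom (ZMod n)) = 0) :
    aeval a g ∈ Ideal.span {(n : S)} := by
  obtain ⟨h, rfl⟩ : C (n : ℤ) ∣ g := (C_dvd_iff_dvd_coeff _ _).mpr fun i ↦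
    (ZMod.intCast_zmod_eq_zero_iff_dvd _ n).mp (by simpa using congrArg (coeff · i) hg)
  rw [map_mul, aeval_C, algebraMap_int_eq, eq_intCast, Int.cast_natCast]
  exact Ideal.mul_mem_right _ _ (Ideal.mem_span_singleton_self _)

theorem exists_monic_sub_mul_C_map_eq_zero {p : ℕ} [Fact p.Prime] {r : ℤ[X]}
    (hr : r.map (Int.castRingHom (ZMod p)) ≠ 0) :
    ∃ q : ℤ[X], ∃ c : ℤ, q.Monic ∧ q.degree ≤ r.degree ∧
      (q - r * C c).map (Int.castRingHom (ZMod p)) = 0 := by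
  set r' := r.map (Int.castRingHom (ZMod p))
  have hlifts : r' * C r'.leadingCoeff⁻¹ ∈ lifts (Int.castRingHom (ZMod p)) :=
    (lifts_iff_coeff_lifts _).mpr fun _ ↦ ZMod.intCast_surjective _
  obtain ⟨q, hq, hqdeg, hqmonic⟩ :=
    lifts_and_degree_eq_and_monic hlifts (monic_mul_leadingCoeff_inv hr)
  obtain ⟨c, hc⟩ := ZMod.intCast_surjective (n := p) r'.leadingCoeff⁻¹
  refine ⟨q, c, hqmonic, ?_, ?_⟩
  · rw [hqdeg, degree_mul_leadingCoeff_inv _ hr]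
    exact degree_map_le
  · rw [Polynomial.map_sub, hq, Polynomial.map_mul, map_C, eq_intCast, hc, sub_self]

theorem exists_monic_degree_le_aeval_mem {S : Type*} [CommRing S] {p : ℕ} [Fact p.Prime]
    {a : S} {I : Ideal S} (hpI : (p : S) ∈ I) {r : ℤ[X]} (hrI : aeval a r ∈ I)
    (hr : r.map (Int.castRingHom (ZMod p)) ≠ 0) :
    ∃ q : ℤ[X], q.Monic ∧ q.degree ≤ r.degree ∧ aeval a q ∈ I := by
  obtain ⟨q, c, hq, hqdeg, hqr⟩ := exists_monic_sub_mul_C_map_eq_zero hr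
  have hdiff : aeval a (q - r * C c) ∈ I :=
    (Ideal.span_singleton_le_iff_mem I).mpr hpI (aeval_mem_span_natCast_of_map_eq_zero a hqr)
  refine ⟨q, hq, hqdeg, ?_⟩
  simpa [map_sub, map_mul] using I.add_mem hdiff (I.mul_mem_right (aeval a (C c)) hrI)

theorem span_natCast_aeval_eq_of_degree_minimal {S : Type*} [CommRing S] {p : ℕ}
    [Fact p.Prime] {a : S} (ha : Function.Surjective (aeval a : ℤ[X] → S)) {I : Ideal S}
    (hpI : (p : S) ∈ I) {μ : ℤ[X]} (hμ : μ.Monic) (hμI : aeval a μ ∈ I)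
    (hμmin : ∀ q : ℤ[X], q.Monic → aeval a q ∈ I → μ.degree ≤ q.degree) :
    Ideal.span {(p : S), aeval a μ} = I := by
  refine le_antisymm (Ideal.span_le.mpr (Set.insert_subset hpI (by simpa using hμI))) ?_
  intro x hxI
  obtain ⟨f, rfl⟩ := ha x
  have hdecomp : aeval a f = aeval a (f %ₘ μ) + aeval a μ * aeval a (f /ₘ μ) := by
    rw [← map_mul, ← map_add, modByMonic_add_div f μ]
  have hrI : aeval a (f %ₘ μ) ∈ I := by
    simpa [hdecomp] using I.sub_mem hxI (I.mul_mem_right (aeval a (f /ₘ μ)) hμI)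
  have hr : (f %ₘ μ).map (Int.castRingHom (ZMod p)) = 0 := by
    by_contra hr
    obtain ⟨q, hq, hqdeg, hqI⟩ := exists_monic_degree_le_aeval_mem hpI hrI hr
    exact (hqdeg.trans_lt (degree_modByMonic_lt f hμ)).not_ge (hμmin q hq hqI)
  rw [hdecomp]
  refine Ideal.add_mem _ ?_ (Ideal.mul_mem_right _ _ (Ideal.subset_span (by simp)))
  exact Ideal.span_mono (by simp) (aeval_mem_span_natCast_of_map_eq_zero a hr)

end Polynomial

theorem span_p_mu_theta_eq_P_general
    (θ : ℂ)
    (𝓟 : Ideal (Algebra.adjoin ℤ {θ}))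
    (p : ℕ) [Fact p.Prime]
    (h𝓟p : 𝓟.comap (algebraMap ℤ (Algebra.adjoin ℤ {θ})) = Ideal.span {(p : ℤ)})
    (μ : ℤ[X]) (hμmonic : μ.Monic)
    (hμ𝓟 : aeval (⟨θ, Algebra.self_mem_adjoin_singleton ℤ θ⟩ : Algebra.adjoin ℤ {θ}) μ ∈ 𝓟)
    (hμmin : ∀ q : ℤ[X], q.Monic →
      aeval (⟨θ, Algebra.self_mem_adjoin_singleton ℤ θ⟩ : Algebra.adjoin ℤ {θ}) q ∈ 𝓟 →
      μ.degree ≤ q.degree) :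
    Ideal.span {((p : ℕ) : Algebra.adjoin ℤ {θ}),
      aeval (⟨θ, Algebra.self_mem_adjoin_singleton ℤ θ⟩ : Algebra.adjoin ℤ {θ}) μ} = 𝓟 := by
  have hp𝓟 : ((p : ℕ) : Algebra.adjoin ℤ {θ}) ∈ 𝓟 := by
    have hp : (p : ℤ) ∈ 𝓟.comap (algebraMap ℤ (Algebra.adjoin ℤ {θ})) :=
      h𝓟p ▸ Ideal.mem_span_singleton_self _
    simpa using hp
  exact span_natCast_aeval_eq_of_degree_minimal
    (Algebra.aeval_adjoin_singleton_surjective θ) hp𝓟 hμmonic hμ𝓟 hμmin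

/-- Let `θ` be an algebraic integer, `R = ℤ[θ]`, `𝓟` a maximal ideal of `R` lying over the
rational prime `p`, and `μ_𝓟` a monic integer polynomial of least degree with `μ_𝓟(θ) ∈ 𝓟`.
Then `p R + μ_𝓟(θ) R = 𝓟`. -/
theorem span_p_mu_theta_eq_P
    (θ : ℂ) (hθ : IsIntegral ℤ θ)
    (𝓟 : Ideal (Algebra.adjoin ℤ {θ})) [𝓟.IsMaximal]
    (p : ℕ) [Fact p.Prime]
    (h𝓟p : 𝓟.comap (algebraMap ℤ (Algebra.adjoin ℤ {θ})) = Ideal.span {(p : ℤ)})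
    (μ : ℤ[X]) (hμmonic : μ.Monic)
    (hμ𝓟 : aeval (⟨θ, Algebra.self_mem_adjoin_singleton ℤ θ⟩ : Algebra.adjoin ℤ {θ}) μ ∈ 𝓟)
    (hμmin : ∀ q : ℤ[X], q.Monic →
      aeval (⟨θ, Algebra.self_mem_adjoin_singleton ℤ θ⟩ : Algebra.adjoin ℤ {θ}) q ∈ 𝓟 →
      μ.degree ≤ q.degree) :
    Ideal.span {((p : ℕ) : Algebra.adjoin ℤ {θ}),
      aeval (⟨θ, Algebra.self_mem_adjoin_singleton ℤ θ⟩ : Algebra.adjoin ℤ {θ}) μ} = 𝓟 :=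
  span_p_mu_theta_eq_P_general θ 𝓟 p h𝓟p μ hμmonic hμ𝓟 hμmin
end

section
/- Let θ be an algebraic integer with minimal polynomial f ∈ ℤ[t], let R = ℤ[θ], let 𝒫 be a maximal ideal of R, and let p be the rational prime with 𝒫 ∩ ℤ = pℤ. Let μ_𝒫 ∈ ℤ[t] be a monic polynomial of least degree such that μ_𝒫(θ) ∈ 𝒫, and let M = (p, μ_𝒫(t)) be the corresponding ideal of ℤ[t]. If f ∉ M², then for every g, h ∈ ℤ[t] satisfying f = μ_𝒫·h + p·g one has gcd(μ̄_𝒫, h̄, ḡ) = 1 in 𝔽_p[t]. -/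
/-!
Minimality of `μ_𝓟` makes `μ̄_𝓟` the minimal polynomial over `𝔽_p` of the image of `θ` in the
residue field `R/𝓟`, so `μ̄_𝓟` is irreducible. If the gcd were not a unit, `μ̄_𝓟` would divide
`h̄` and `ḡ`, i.e. `h, g ∈ M`, and then `f = μ_𝓟 h + p g ∈ M²`.
-/

open Polynomial

theorem Polynomial.map_eq_minpoly_of_forall_degree_le {R k B : Type*} [CommRing R] [Field k]
    [Ring B] [Algebra k B] {φ : R →+* k} (hφ : Function.Surjective φ) {x : B} {μ : R[X]}
    (hμ : μ.Monic) (hroot : aeval x (μ.map φ) = 0)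
    (hmin : ∀ q : R[X], q.Monic → aeval x (q.map φ) = 0 → μ.degree ≤ q.degree) :
    μ.map φ = minpoly k x := by
  refine minpoly.unique k x (hμ.map φ) hroot fun q hq hqx => ?_
  obtain ⟨q', rfl, hdeg, hq'⟩ := lifts_and_degree_eq_and_monic (map_surjective φ hφ q) hq
  rw [hμ.degree_map, ← hdeg]
  exact hmin q' hq' hqx

theorem Polynomial.mem_span_C_natCast_insert_iff_map_dvd (n : ℕ) (μ r : ℤ[X]) :
    r ∈ Ideal.span {C (n : ℤ), μ} ↔
      μ.map (Int.castRingHom (ZMod n)) ∣ r.map (Int.castRingHom (ZMod n)) := by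
  set f := mapRingHom (Int.castRingHom (ZMod n))
  have hspan : Ideal.span {C (n : ℤ), μ} = (Ideal.span {f μ}).comap f := by
    rw [← Set.image_singleton, ← Ideal.map_span,
      Ideal.comap_map_of_surjective' f (map_surjective _ ZMod.intCast_surjective),
      ker_mapRingHom, ZMod.ker_intCastRingHom, Ideal.map_span, Set.image_singleton,
      Ideal.span_insert, sup_comm]
  rw [hspan, Ideal.mem_comap, Ideal.mem_span_singleton]
  rfl

theorem Irreducible.dvd_and_dvd_of_not_isUnit_gcd_gcd {R : Type*} [EuclideanDomain R]
    [DecidableEq R] {a b c : R} (ha : Irreducible a)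
    (hgcd : ¬IsUnit (EuclideanDomain.gcd (EuclideanDomain.gcd a b) c)) :
    a ∣ b ∧ a ∣ c := by
  have hgcd_dvd : EuclideanDomain.gcd (EuclideanDomain.gcd a b) c ∣ a :=
    (EuclideanDomain.gcd_dvd_left _ _).trans (EuclideanDomain.gcd_dvd_left _ _)
  have ha_dvd := ((ha.dvd_iff.mp hgcd_dvd).resolve_left hgcd).dvd
  exact ⟨ha_dvd.trans ((EuclideanDomain.gcd_dvd_left _ _).trans
    (EuclideanDomain.gcd_dvd_right _ _)), ha_dvd.trans (EuclideanDomain.gcd_dvd_right _ _)⟩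

theorem Ideal.mul_add_mul_mem_sq {R : Type*} [CommRing R] {I : Ideal R} {a b x y : R}
    (ha : a ∈ I) (hb : b ∈ I) (hx : x ∈ I) (hy : y ∈ I) : a * x + b * y ∈ I ^ 2 :=
  sq I ▸ add_mem (mul_mem_mul ha hx) (mul_mem_mul hb hy)

theorem Polynomial.irreducible_map_zmod_of_forall_degree_le {A : Type*} [CommRing A]
    (𝓟 : Ideal A) [𝓟.IsMaximal] {p : ℕ} [Fact p.Prime] (hp : (p : A) ∈ 𝓟) {x : A} {μ : ℤ[X]}
    (hμ : μ.Monic) (hμ𝓟 : aeval x μ ∈ 𝓟)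
    (hmin : ∀ q : ℤ[X], q.Monic → aeval x q ∈ 𝓟 → μ.degree ≤ q.degree) :
    Irreducible (μ.map (Int.castRingHom (ZMod p))) := by
  let : Field (A ⧸ 𝓟) := Ideal.Quotient.field 𝓟
  have : CharP (A ⧸ 𝓟) p := (CharP.charP_iff_prime_eq_zero Fact.out).2 <| by
    rwa [← map_natCast (Ideal.Quotient.mk 𝓟), Ideal.Quotient.eq_zero_iff_mem]
  let : Algebra (ZMod p) (A ⧸ 𝓟) := ZMod.algebra _ p
  have hroot (q : ℤ[X]) :
      aeval (Ideal.Quotient.mk 𝓟 x) (q.map (Int.castRingHom (ZMod p))) = 0 ↔ aeval x q ∈ 𝓟 := by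
    rw [← algebraMap_int_eq, aeval_map_algebraMap, ← Ideal.Quotient.mkₐ_eq_mk ℤ,
      aeval_algHom_apply, Ideal.Quotient.mkₐ_eq_mk, Ideal.Quotient.eq_zero_iff_mem]
  rw [map_eq_minpoly_of_forall_degree_le ZMod.intCast_surjective hμ ((hroot μ).2 hμ𝓟)
    fun q hq hqx => hmin q hq ((hroot q).1 hqx)]
  exact minpoly.irreducible ⟨_, hμ.map _, (hroot μ).2 hμ𝓟⟩

theorem gcd_one_of_not_mem_M_sq_general
    (θ : ℂ)
    (𝓟 : Ideal (Algebra.adjoin ℤ {θ})) [𝓟.IsMaximal]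
    (p : ℕ) [Fact p.Prime]
    (h𝓟p : 𝓟.comap (algebraMap ℤ (Algebra.adjoin ℤ {θ})) = Ideal.span {(p : ℤ)})
    (μ : ℤ[X]) (hμmonic : μ.Monic)
    (hμ𝓟 : aeval (⟨θ, Algebra.self_mem_adjoin_singleton ℤ θ⟩ : Algebra.adjoin ℤ {θ}) μ ∈ 𝓟)
    (hμmin : ∀ q : ℤ[X], q.Monic →
      aeval (⟨θ, Algebra.self_mem_adjoin_singleton ℤ θ⟩ : Algebra.adjoin ℤ {θ}) q ∈ 𝓟 →
      μ.degree ≤ q.degree)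
    (hM : minpoly ℤ θ ∉ (Ideal.span {Polynomial.C (p : ℤ), μ}) ^ 2) :
    ∀ g h : ℤ[X], minpoly ℤ θ = μ * h + Polynomial.C (p : ℤ) * g →
      IsUnit (EuclideanDomain.gcd
        (EuclideanDomain.gcd (μ.map (Int.castRingHom (ZMod p)))
          (h.map (Int.castRingHom (ZMod p))))
        (g.map (Int.castRingHom (ZMod p)))) := by
  intro g h hf
  have hp𝓟 : (p : Algebra.adjoin ℤ {θ}) ∈ 𝓟 := by
    have hp : (p : ℤ) ∈ 𝓟.comap (algebraMap ℤ (Algebra.adjoin ℤ {θ})) :=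
      h𝓟p ▸ Ideal.mem_span_singleton_self _
    simpa using Ideal.mem_comap.mp hp
  have hirr := irreducible_map_zmod_of_forall_degree_le 𝓟 hp𝓟 hμmonic hμ𝓟 hμmin
  by_contra hgcd
  obtain ⟨hμh, hμg⟩ := hirr.dvd_and_dvd_of_not_isUnit_gcd_gcd hgcd
  refine hM (hf ▸ Ideal.mul_add_mul_mem_sq ?_ ?_ ?_ ?_)
  · exact Ideal.subset_span (by simp)
  · exact Ideal.subset_span (by simp)
  · exact (mem_span_C_natCast_insert_iff_map_dvd p μ h).2 hμh
  · exact (mem_span_C_natCast_insert_iff_map_dvd p μ g).2 hμg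

/-- Let `θ` be an algebraic integer with minimal polynomial `f`, `R = ℤ[θ]`, `𝓟` a maximal
ideal of `R` lying over the rational prime `p`, `μ_𝓟` a monic integer polynomial of least
degree with `μ_𝓟(θ) ∈ 𝓟`, and `M = (p, μ_𝓟(t)) ⊆ ℤ[t]`.  If `f ∉ M²`, then for every
`g, h ∈ ℤ[t]` with `f = μ_𝓟 h + p g` one has `gcd(μ̄_𝓟, h̄, ḡ) = 1` in `𝔽_p[t]`. -/
theorem gcd_one_of_not_mem_M_sq
    (θ : ℂ) (hθ : IsIntegral ℤ θ)
    (𝓟 : Ideal (Algebra.adjoin ℤ {θ})) [𝓟.IsMaximal]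
    (p : ℕ) [Fact p.Prime]
    (h𝓟p : 𝓟.comap (algebraMap ℤ (Algebra.adjoin ℤ {θ})) = Ideal.span {(p : ℤ)})
    (μ : ℤ[X]) (hμmonic : μ.Monic)
    (hμ𝓟 : aeval (⟨θ, Algebra.self_mem_adjoin_singleton ℤ θ⟩ : Algebra.adjoin ℤ {θ}) μ ∈ 𝓟)
    (hμmin : ∀ q : ℤ[X], q.Monic →
      aeval (⟨θ, Algebra.self_mem_adjoin_singleton ℤ θ⟩ : Algebra.adjoin ℤ {θ}) q ∈ 𝓟 →
      μ.degree ≤ q.degree)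
    (hM : minpoly ℤ θ ∉ (Ideal.span {Polynomial.C (p : ℤ), μ}) ^ 2) :
    ∀ g h : ℤ[X], minpoly ℤ θ = μ * h + Polynomial.C (p : ℤ) * g →
      IsUnit (EuclideanDomain.gcd
        (EuclideanDomain.gcd (μ.map (Int.castRingHom (ZMod p)))
          (h.map (Int.castRingHom (ZMod p))))
        (g.map (Int.castRingHom (ZMod p)))) :=
  gcd_one_of_not_mem_M_sq_general θ 𝓟 p h𝓟p μ hμmonic hμ𝓟 hμmin hM
end

section
/- Let ν ≥ 3 be a square-free integer with ν ≡ 2 or 3 (mod 4), and let P_n(t) = f^{∘n}(t) be the n-th iterate of f(t) = t² − ν in ℤ[t]. Then for every prime divisor p of ν and every n ≥ 1, the polynomial P_n is p-Eisenstein: p divides every coefficient of P_n except the leading one, and p² does not divide the constant term P_n(0). -/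
/-!
Since `ν ∈ (p)`, every iterate of `t ↦ t² − ν` is monic of degree `2ⁿ` and congruent to
`X ^ 2ⁿ` modulo `(p)`. For `n ≥ 1` its constant term is `a² − ν` with `a ∈ (p)`, so it
lies in `(p)²` only if `ν` does, which squarefreeness rules out.
-/

open Polynomial

namespace Polynomial.IsDistinguishedAt

variable {R : Type*} [CommRing R] {I : Ideal R}

theorem X : (X : R[X]).IsDistinguishedAt I := by
  refine ⟨⟨fun {n} hn => ?_⟩, monic_X⟩
  have hn1 : 1 ≠ n := ((hn.trans_le natDegree_X_le).ne).symm
  rw [coeff_X, if_neg hn1]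
  exact I.zero_mem

theorem sub_C {f : R[X]} (hf : f.IsDistinguishedAt I) {c : R} (hc : c ∈ I)
    (hf0 : 0 < f.natDegree) : (f - C c).IsDistinguishedAt I := by
  refine ⟨⟨fun {n} hn => ?_⟩, hf.monic.sub_of_left ?_⟩
  · rw [natDegree_sub_C] at hn
    rw [coeff_sub, coeff_C]
    exact I.sub_mem (hf.mem hn) (by split_ifs <;> simp [hc])
  · exact degree_C_le.trans_lt (natDegree_pos_iff_degree_pos.mp hf0)

end Polynomial.IsDistinguishedAt

section IterateSqSubC

variable {R : Type*} [CommRing R] {c : R} {P : ℕ → R[X]}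

theorem monic_and_natDegree_of_iterate_sq_sub_C [Nontrivial R] (hP0 : P 0 = X)
    (hPs : ∀ n, P (n + 1) = P n ^ 2 - C c) (n : ℕ) :
    (P n).Monic ∧ (P n).natDegree = 2 ^ n := by
  induction n with
  | zero => simp [hP0]
  | succ n ih =>
    obtain ⟨hmonic, hdeg⟩ := ih
    have hsq : (P n ^ 2).natDegree = 2 ^ (n + 1) := by
      rw [hmonic.natDegree_pow, hdeg, pow_succ, mul_comm]
    rw [hPs, natDegree_sub_C, hsq]
    refine ⟨(hmonic.pow 2).sub_of_left (degree_C_le.trans_lt ?_), rfl⟩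
    exact natDegree_pos_iff_degree_pos.mp (hsq ▸ by positivity)

theorem isDistinguishedAt_of_iterate_sq_sub_C [Nontrivial R] {I : Ideal R} (hc : c ∈ I)
    (hP0 : P 0 = X) (hPs : ∀ n, P (n + 1) = P n ^ 2 - C c) (n : ℕ) :
    (P n).IsDistinguishedAt I := by
  induction n with
  | zero => exact hP0 ▸ IsDistinguishedAt.X
  | succ n ih =>
    rw [hPs, pow_two]
    refine (ih.mul ih).sub_C hc ?_
    rw [← pow_two, (monic_and_natDegree_of_iterate_sq_sub_C hP0 hPs n).1.natDegree_pow,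
      (monic_and_natDegree_of_iterate_sq_sub_C hP0 hPs n).2]
    positivity

theorem coeff_zero_notMem_sq_of_iterate_sq_sub_C [Nontrivial R] {I : Ideal R} (hc : c ∈ I)
    (hc2 : c ∉ I ^ 2) (hP0 : P 0 = X) (hPs : ∀ n, P (n + 1) = P n ^ 2 - C c) (n : ℕ) :
    (P (n + 1)).coeff 0 ∉ I ^ 2 := by
  have ha : (P n).coeff 0 ∈ I := (isDistinguishedAt_of_iterate_sq_sub_C hc hP0 hPs n).mem <| by
    rw [(monic_and_natDegree_of_iterate_sq_sub_C hP0 hPs n).2]; positivity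
  have hsq : (P n).coeff 0 * (P n).coeff 0 ∈ I ^ 2 := pow_two I ▸ Ideal.mul_mem_mul ha ha
  rw [hPs, coeff_sub, coeff_C_zero, pow_two (P n), mul_coeff_zero]
  intro h
  exact hc2 (sub_sub_cancel (_ : R) c ▸ (I ^ 2).sub_mem hsq h)

theorem isEisensteinAt_of_iterate_sq_sub_C [Nontrivial R] {I : Ideal R} (hI : I ≠ ⊤)
    (hc : c ∈ I) (hc2 : c ∉ I ^ 2) (hP0 : P 0 = X) (hPs : ∀ n, P (n + 1) = P n ^ 2 - C c)
    (n : ℕ) : (P (n + 1)).IsEisensteinAt I :=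
  have hdist := isDistinguishedAt_of_iterate_sq_sub_C hc hP0 hPs (n + 1)
  hdist.monic.isEisensteinAt_of_mem_of_notMem hI hdist.mem
    (coeff_zero_notMem_sq_of_iterate_sq_sub_C hc hc2 hP0 hPs n)

end IterateSqSubC

theorem iterate_isEisensteinAt_general
    (ν : ℕ) (hsf : Squarefree ν)
    (P : ℕ → Polynomial ℤ)
    (hP0 : P 0 = Polynomial.X)
    (hPs : ∀ n, P (n + 1) = (P n) ^ 2 - Polynomial.C (ν : ℤ))
    (p : ℕ) (hp : p.Prime) (hpν : p ∣ ν)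
    (n : ℕ) (hn : 1 ≤ n) :
    (P n).IsEisensteinAt (Ideal.span {(p : ℤ)}) := by
  obtain ⟨m, rfl⟩ := Nat.exists_eq_add_of_le' hn
  have hp' : Prime (p : ℤ) := Nat.prime_iff_prime_int.mp hp
  refine isEisensteinAt_of_iterate_sq_sub_C ?_ ?_ ?_ hP0 hPs m
  · exact Ideal.span_singleton_ne_top hp'.not_isUnit
  · exact Ideal.mem_span_singleton.mpr (Int.natCast_dvd_natCast.mpr hpν)
  · rw [Ideal.span_singleton_pow, Ideal.mem_span_singleton, pow_two, ← Nat.cast_mul,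
      Int.natCast_dvd_natCast]
    exact fun h => hp.not_isUnit (hsf p h)

/-- Let `ν ≥ 3` be a square-free integer with `ν ≡ 2` or `3 (mod 4)`, and let
`P n = f^{∘n}` be the `n`-th iterate of `f(t) = t² − ν`.  Then for every prime divisor `p`
of `ν` and every `n ≥ 1`, the polynomial `P n` is `p`-Eisenstein. -/
theorem iterate_isEisensteinAt
    (ν : ℕ) (hν3 : 3 ≤ ν) (hsf : Squarefree ν) (hmod : ν % 4 = 2 ∨ ν % 4 = 3)
    (P : ℕ → Polynomial ℤ)
    (hP0 : P 0 = Polynomial.X)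
    (hPs : ∀ n, P (n + 1) = (P n) ^ 2 - Polynomial.C (ν : ℤ))
    (p : ℕ) (hp : p.Prime) (hpν : p ∣ ν)
    (n : ℕ) (hn : 1 ≤ n) :
    (P n).IsEisensteinAt (Ideal.span {(p : ℤ)}) :=
  iterate_isEisensteinAt_general ν hsf P hP0 hPs p hp hpν n hn
end

section
/- Let ν ≥ 3 be a square-free integer with ν ≡ 2 or 3 (mod 4), and let P_n(t) = f^{∘n}(t) be the n-th iterate of f(t) = t² − ν in ℤ[t]. Each P_n (n ≥ 1) has only monomials of even degree; write P_n(t) = R_n(t)·t⁴ + D_n·t² + C_n with R_n ∈ ℤ[t], D_n ∈ ℤ the coefficient of t², and C_n = P_n(0) the constant term. Then for every n ≥ 2, a prime q divides D_{n+1} if and only if q divides C_k for some k with 1 ≤ k ≤ n; i.e., the set of prime divisors of D_{n+1} equals the union over 1 ≤ k ≤ n of the sets of prime divisors of C_k. -/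
/-!
The coefficient of `t` vanishes in every iterate, so squaring gives `D (m+2) = 2 C (m+1) D (m+1)`
with `D 1 = 1`, i.e. `D (n+1) = 2ⁿ C 1 ⋯ C n`. The prime divisors of `D (n+1)` are therefore those
of `C 1, …, C n` together with `2`, and `2` already divides `C 2 = ν (ν - 1)`.
-/

open Polynomial Finset

section Square

variable {R : Type*} [CommSemiring R]

lemma coeff_one_sq (p : R[X]) : (p ^ 2).coeff 1 = 2 * (p.coeff 0 * p.coeff 1) := by
  rw [sq, coeff_mul]
  simp only [Nat.sum_antidiagonal_eq_sum_range_succ_mk, sum_range_succ, sum_range_zero]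
  ring

lemma coeff_two_sq (p : R[X]) :
    (p ^ 2).coeff 2 = 2 * p.coeff 0 * p.coeff 2 + p.coeff 1 ^ 2 := by
  rw [sq, coeff_mul]
  simp only [Nat.sum_antidiagonal_eq_sum_range_succ_mk, sum_range_succ, sum_range_zero]
  ring

end Square

namespace QuadraticIterate

variable {R : Type*} [CommRing R] {c : R} {P : ℕ → R[X]}

lemma coeff_one_succ (hP0 : P 0 = X) (hPs : ∀ n, P (n + 1) = P n ^ 2 - C c) (m : ℕ) :
    (P (m + 1)).coeff 1 = 0 := by
  induction m with
  | zero => simp [hPs, hP0, coeff_one_sq]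
  | succ m ih => simp [hPs (m + 1), coeff_one_sq, ih]

lemma coeff_zero_succ (hPs : ∀ n, P (n + 1) = P n ^ 2 - C c) (m : ℕ) :
    (P (m + 1)).coeff 0 = (P m).coeff 0 ^ 2 - c := by
  rw [hPs, coeff_sub, coeff_C_zero, sq, mul_coeff_zero, sq]

lemma coeff_two_one (hP0 : P 0 = X) (hPs : ∀ n, P (n + 1) = P n ^ 2 - C c) :
    (P 1).coeff 2 = 1 := by
  simp [hPs 0, hP0]

lemma coeff_two_succ_succ (hP0 : P 0 = X) (hPs : ∀ n, P (n + 1) = P n ^ 2 - C c) (m : ℕ) :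
    (P (m + 2)).coeff 2 = 2 * (P (m + 1)).coeff 0 * (P (m + 1)).coeff 2 := by
  simp [hPs (m + 1), coeff_two_sq, coeff_one_succ hP0 hPs m]

lemma coeff_two_succ_eq_prod (hP0 : P 0 = X) (hPs : ∀ n, P (n + 1) = P n ^ 2 - C c) (m : ℕ) :
    (P (m + 1)).coeff 2 = 2 ^ m * ∏ k ∈ Icc 1 m, (P k).coeff 0 := by
  induction m with
  | zero => simp [coeff_two_one hP0 hPs]
  | succ m ih =>
    rw [coeff_two_succ_succ hP0 hPs, ih, prod_Icc_succ_top (Nat.le_add_left 1 m)]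
    ring

lemma even_coeff_zero_two {P : ℕ → ℤ[X]} {c : ℤ} (hP0 : P 0 = X)
    (hPs : ∀ n, P (n + 1) = P n ^ 2 - C c) : Even ((P 2).coeff 0) := by
  have hC2 : (P 2).coeff 0 = c * (c - 1) := by
    rw [coeff_zero_succ hPs, coeff_zero_succ hPs, hP0, coeff_X_zero]
    ring
  exact hC2 ▸ Int.even_mul_pred_self c

end QuadraticIterate

open QuadraticIterate in
theorem prime_divisors_of_D_succ_general
    (ν : ℕ)
    (P : ℕ → Polynomial ℤ)
    (hP0 : P 0 = Polynomial.X)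
    (hPs : ∀ n, P (n + 1) = (P n) ^ 2 - Polynomial.C (ν : ℤ))
    (n : ℕ) (hn : 2 ≤ n) :
    ∀ q : ℕ, q.Prime →
      ((q : ℤ) ∣ (P (n + 1)).coeff 2 ↔ ∃ k, 1 ≤ k ∧ k ≤ n ∧ (q : ℤ) ∣ (P k).coeff 0) := by
  intro q hq
  have hq' : Prime (q : ℤ) := Nat.prime_iff_prime_int.mp hq
  simp only [coeff_two_succ_eq_prod hP0 hPs n, hq'.dvd_mul, hq'.dvd_finsetProd_iff, mem_Icc,
    and_assoc]
  refine ⟨fun h ↦ h.elim (fun h2 ↦ ⟨2, one_le_two, hn, ?_⟩) id, Or.inr⟩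
  exact (hq'.dvd_of_dvd_pow h2).trans (even_coeff_zero_two hP0 hPs).two_dvd

/-- Let `ν ≥ 3` be a square-free integer with `ν ≡ 2` or `3 (mod 4)`, and let
`P n = f^{∘n}` be the `n`-th iterate of `f(t) = t² − ν`.  Writing `D n` for the coefficient
of `t²` and `C n = P n (0)` for the constant term, for every `n ≥ 2` the set of prime
divisors of `D (n+1)` is the union over `1 ≤ k ≤ n` of the sets of prime divisors of
`C k`. -/
theorem prime_divisors_of_D_succ
    (ν : ℕ) (hν3 : 3 ≤ ν) (hsf : Squarefree ν) (hmod : ν % 4 = 2 ∨ ν % 4 = 3)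
    (P : ℕ → Polynomial ℤ)
    (hP0 : P 0 = Polynomial.X)
    (hPs : ∀ n, P (n + 1) = (P n) ^ 2 - Polynomial.C (ν : ℤ))
    (n : ℕ) (hn : 2 ≤ n) :
    ∀ q : ℕ, q.Prime →
      ((q : ℤ) ∣ (P (n + 1)).coeff 2 ↔ ∃ k, 1 ≤ k ∧ k ≤ n ∧ (q : ℤ) ∣ (P k).coeff 0) :=
  prime_divisors_of_D_succ_general ν P hP0 hPs n hn
end

section
/- Let ν ≥ 3 be a square-free integer with ν ≡ 2 or 3 (mod 4), let P_n(t) = f^{∘n}(t) be the n-th iterate of f(t) = t² − ν in ℤ[t], and let C_n = P_n(0). Let p be an odd prime not dividing ν which divides C_m for some m ≥ 1, and let n(p) be the least positive integer n such that p divides C_n. Then for all non-negative integers k and ℓ that are not congruent modulo n(p), the reductions P̄_k and P̄_ℓ are coprime in 𝔽_p[t]. -/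
/-!
Reduced modulo `p`, the polynomials `P̄ n` are the iterates `f^{∘n}` of `f = t² − ν` over `𝔽_p`,
and `C̄ n` is the orbit of `0` under the map `x ↦ f(x)`; the hypotheses say that `0` is a periodic
point of this map of exact period `n(p)`. For `k ≤ ℓ` write `P̄ ℓ = P̄_{ℓ-k} ∘ P̄ k`; modulo `P̄ k`
this is the constant `C̄_{ℓ-k}`, which is nonzero when `n(p) ∤ ℓ - k`, so `P̄ k` and `P̄ ℓ`
generate the unit ideal.
-/

open Polynomial Function

theorem Function.minimalPeriod_eq_of_forall_le {α : Type*} {f : α → α} {x : α} {n : ℕ}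
    (hn : 0 < n) (hx : IsPeriodicPt f n x) (hmin : ∀ m, 0 < m → IsPeriodicPt f m x → n ≤ m) :
    minimalPeriod f x = n :=
  le_antisymm (hx.minimalPeriod_le hn) <| hmin _ (hx.minimalPeriod_pos hn)
    (isPeriodicPt_minimalPeriod f x)

namespace Polynomial

variable {R : Type*} [CommRing R]

theorem iterate_comp_X_comp (f q : R[X]) (n : ℕ) : (f.comp^[n] X).comp q = f.comp^[n] q := by
  induction n with
  | zero => simp
  | succ n ih => rw [iterate_succ_apply', iterate_succ_apply', comp_assoc, ih]

theorem iterate_comp_X_add (f : R[X]) (m n : ℕ) :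
    f.comp^[m + n] X = (f.comp^[n] X).comp (f.comp^[m] X) := by
  rw [iterate_comp_X_comp, add_comm, iterate_add_apply]

theorem eval_iterate_comp_X (f : R[X]) (n : ℕ) (x : R) :
    (f.comp^[n] X).eval x = (fun y => f.eval y)^[n] x := by
  rw [iterate_comp_eval, eval_X]

theorem isCoprime_comp_of_isUnit_eval_zero {g : R[X]} (hg : IsUnit (g.eval 0)) (q : R[X]) :
    IsCoprime q (g.comp q) := by
  obtain ⟨h, hh⟩ := X_dvd_sub_C (p := g)
  have hcomp : g.comp q = C (g.eval 0) + q * h.comp q := by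
    rw [← coeff_zero_eq_eval_zero, ← sub_eq_iff_eq_add', ← C_comp (p := q), ← sub_comp, hh,
      mul_comp, X_comp]
  rw [hcomp]
  exact (isCoprime_one_right.of_isCoprime_of_dvd_right (isUnit_C.mpr hg).dvd).add_mul_left_right _

theorem isCoprime_iterate_comp_X {K : Type*} [Field K] (f : K[X]) {k l : ℕ}
    (hkl : ¬ k ≡ l [MOD minimalPeriod (fun x => f.eval x) 0]) :
    IsCoprime (f.comp^[k] X) (f.comp^[l] X) := by
  wlog hle : k ≤ l generalizing k l
  · exact (this (fun h => hkl h.symm) (le_of_not_ge hle)).symm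
  obtain ⟨d, rfl⟩ := Nat.exists_eq_add_of_le hle
  have hd : (f.comp^[d] X).eval 0 ≠ 0 := by
    rw [eval_iterate_comp_X]
    intro h
    have hper : IsPeriodicPt (fun x => f.eval x) d 0 := h
    exact hkl ((Nat.modEq_iff_dvd' hle).mpr (by simpa using hper.minimalPeriod_dvd))
  rw [iterate_comp_X_add]
  exact isCoprime_comp_of_isUnit_eval_zero hd.isUnit _

end Polynomial

theorem reductions_coprime_of_not_modEq_general
    (ν : ℕ)
    (P : ℕ → Polynomial ℤ)
    (hP0 : P 0 = Polynomial.X)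
    (hPs : ∀ n, P (n + 1) = (P n) ^ 2 - Polynomial.C (ν : ℤ))
    (p : ℕ) [Fact p.Prime]
    (np : ℕ) (hnp1 : 1 ≤ np)
    (hnpdvd : (p : ℤ) ∣ (P np).coeff 0)
    (hnpleast : ∀ k, 1 ≤ k → (p : ℤ) ∣ (P k).coeff 0 → np ≤ k)
    (k l : ℕ) (hkl : ¬ k ≡ l [MOD np]) :
    IsCoprime ((P k).map (Int.castRingHom (ZMod p)))
      ((P l).map (Int.castRingHom (ZMod p))) := by
  set f : (ZMod p)[X] := X ^ 2 - C (ν : ZMod p)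
  have hPf : ∀ n, (P n).map (Int.castRingHom (ZMod p)) = f.comp^[n] X := by
    intro n
    induction n with
    | zero => simp [hP0]
    | succ n ih => rw [hPs, iterate_succ_apply', ← ih]; simp [f]
  have hdvd_iff : ∀ n, (p : ℤ) ∣ (P n).coeff 0 ↔ IsPeriodicPt (fun x => f.eval x) n 0 := by
    intro n
    rw [← ZMod.intCast_zmod_eq_zero_iff_dvd, ← eq_intCast (Int.castRingHom (ZMod p)),
      ← coeff_map, hPf, coeff_zero_eq_eval_zero, eval_iterate_comp_X]
    rfl
  have hperiod : minimalPeriod (fun x => f.eval x) 0 = np :=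
    minimalPeriod_eq_of_forall_le hnp1 ((hdvd_iff np).mp hnpdvd)
      fun m hm hper => hnpleast m hm ((hdvd_iff m).mpr hper)
  rw [hPf, hPf]
  exact isCoprime_iterate_comp_X f (hperiod ▸ hkl)

/-- Let `ν ≥ 3` be a square-free integer with `ν ≡ 2` or `3 (mod 4)`, `P n = f^{∘n}` the
`n`-th iterate of `f(t) = t² − ν`, and `C n = P n (0)`.  Let `p` be an odd prime not
dividing `ν`, dividing some `C m` with `m ≥ 1`, and let `n(p)` be the least positive index
`n` with `p ∣ C n`.  Then for all non-negative `k, ℓ` not congruent modulo `n(p)`, the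
reductions `P̄ k` and `P̄ ℓ` are coprime in `𝔽_p[t]`. -/
theorem reductions_coprime_of_not_modEq
    (ν : ℕ) (hν3 : 3 ≤ ν) (hsf : Squarefree ν) (hmod : ν % 4 = 2 ∨ ν % 4 = 3)
    (P : ℕ → Polynomial ℤ)
    (hP0 : P 0 = Polynomial.X)
    (hPs : ∀ n, P (n + 1) = (P n) ^ 2 - Polynomial.C (ν : ℤ))
    (p : ℕ) [Fact p.Prime] (hp2 : p ≠ 2) (hpν : ¬ p ∣ ν)
    (np : ℕ) (hnp1 : 1 ≤ np)
    (hnpdvd : (p : ℤ) ∣ (P np).coeff 0)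
    (hnpleast : ∀ k, 1 ≤ k → (p : ℤ) ∣ (P k).coeff 0 → np ≤ k)
    (k l : ℕ) (hkl : ¬ k ≡ l [MOD np]) :
    IsCoprime ((P k).map (Int.castRingHom (ZMod p)))
      ((P l).map (Int.castRingHom (ZMod p))) :=
  reductions_coprime_of_not_modEq_general ν P hP0 hPs p np hnp1 hnpdvd hnpleast k l hkl
end

section
/- Let ν ≥ 3 be a square-free integer with ν ≡ 2 or 3 (mod 4), let P_n(t) = f^{∘n}(t) be the n-th iterate of f(t) = t² − ν in ℤ[t], and write P_m(t) = R_m(t)·t⁴ + D_m·t² + C_m (for m ≥ 1) with R_m ∈ ℤ[t], D_m the coefficient of t², and C_m = P_m(0). Let p be an odd prime not dividing ν which divides C_m for some m ≥ 1, and let n(p) be the least positive integer n such that p divides C_n. Then for every n ≥ 0, the polynomial P̄_n²·R̄_{n(p)}(P̄_n) + D̄_{n(p)} is separable in 𝔽_p[t]. -/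
/-!
Write `P_m` for the iterates over `𝔽_p` and `c_m = P_m(0)`, so that `c_{n(p)} = 0`, the orbit of `0`
is periodic with period `n(p)`, and `P_{n(p)} = X² h` with `h = R X² + D`.  The coefficient of `X²`
obeys `D_{m+1} = 2 c_m D_m`, so `D ≠ 0` by minimality of `n(p)`; in particular `h(0) ≠ 0`.
Since `P_m' = 2^m ∏_{k<m} P_k`, a critical point of `P_m` is a root of an earlier iterate.
Let `α` be a double root of `h ∘ P_n` over the algebraic closure and `β = P_n(α)`, a root of `h`.
If `P_n'(α) = 0` then `β = c_j` for some `j`, and `P_{n(p)}(c_j) = c_{j + n(p)} = c_j` forces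
`β = 0`.  Otherwise `h'(β) = 0`, so `β ≠ 0` is a double root of `P_{n(p)}`, hence `P_k(β) = 0`
for some `0 < k < n(p)`, and then `0 = P_{n(p)}(β) = c_{n(p)-k}` contradicts minimality.
-/

open Polynomial

noncomputable def quadIter {R : Type*} [CommRing R] (a : R) : ℕ → R[X]
  | 0 => X
  | n + 1 => quadIter a n ^ 2 - C a

section CommRing

variable {R : Type*} [CommRing R] (a : R)

@[simp] lemma quadIter_zero : quadIter a 0 = X := rfl

lemma quadIter_succ (n : ℕ) : quadIter a (n + 1) = quadIter a n ^ 2 - C a := rfl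

lemma quadIter_add (m n : ℕ) : quadIter a (m + n) = (quadIter a n).comp (quadIter a m) := by
  induction n with
  | zero => simp
  | succ n ih => rw [← add_assoc, quadIter_succ, quadIter_succ, ih, sub_comp, pow_comp, C_comp]

lemma map_quadIter {S : Type*} [CommRing S] (f : R →+* S) (n : ℕ) :
    (quadIter a n).map f = quadIter (f a) n := by
  induction n with
  | zero => simp
  | succ n ih => simp [quadIter_succ, ih]

lemma derivative_quadIter (n : ℕ) :
    derivative (quadIter a n) = 2 ^ n * ∏ k ∈ Finset.range n, quadIter a k := by
  induction n with
  | zero => simp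
  | succ n ih =>
    rw [quadIter_succ, derivative_sub, derivative_C, sub_zero, derivative_sq, ih,
      Finset.prod_range_succ, map_ofNat]
    ring

lemma coeff_one_quadIter {n : ℕ} (hn : 1 ≤ n) : (quadIter a n).coeff 1 = 0 := by
  induction n, hn using Nat.le_induction with
  | base => simp [quadIter_succ]
  | succ n hn ih =>
    simp [quadIter_succ, sq, coeff_mul, Finset.Nat.sum_antidiagonal_eq_sum_range_succ_mk,
      Finset.sum_range_succ, ih]

lemma coeff_two_quadIter_one : (quadIter a 1).coeff 2 = 1 := by
  simp [quadIter_succ]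

lemma coeff_two_quadIter_succ {n : ℕ} (hn : 1 ≤ n) :
    (quadIter a (n + 1)).coeff 2 = 2 * (quadIter a n).coeff 0 * (quadIter a n).coeff 2 := by
  simp [quadIter_succ, sq, coeff_mul, Finset.Nat.sum_antidiagonal_eq_sum_range_succ_mk,
    Finset.sum_range_succ, coeff_one_quadIter a hn]
  ring

lemma eval_zero_quadIter_add_of_eval_zero {N : ℕ} (hN : (quadIter a N).eval 0 = 0) (m : ℕ) :
    (quadIter a (N + m)).eval 0 = (quadIter a m).eval 0 := by
  rw [quadIter_add, eval_comp, hN]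

end CommRing

section Domain

variable {R : Type*} [CommRing R] [IsDomain R] (a : R)

lemma coeff_two_quadIter_ne_zero (h2 : (2 : R) ≠ 0) {m : ℕ} (hm : 1 ≤ m)
    (hmin : ∀ k, 1 ≤ k → k < m → (quadIter a k).eval 0 ≠ 0) : (quadIter a m).coeff 2 ≠ 0 := by
  induction m, hm using Nat.le_induction with
  | base => simp [coeff_two_quadIter_one]
  | succ m hm ih =>
    rw [coeff_two_quadIter_succ a hm, coeff_zero_eq_eval_zero]
    exact mul_ne_zero (mul_ne_zero h2 (hmin m hm m.lt_succ_self))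
      (ih fun k hk hkm => hmin k hk (hkm.trans m.lt_succ_self))

lemma exists_lt_eval_quadIter_eq_zero (h2 : (2 : R) ≠ 0) {n : ℕ} {α : R}
    (hα : (derivative (quadIter a n)).eval α = 0) : ∃ k < n, (quadIter a k).eval α = 0 := by
  simp only [derivative_quadIter, eval_mul, eval_pow, eval_ofNat, eval_prod,
    mul_eq_zero, pow_eq_zero_iff', h2, false_and, false_or, Finset.prod_eq_zero_iff,
    Finset.mem_range] at hα
  exact hα

end Domain

section Cofactor

variable {R : Type*} [CommRing R] [IsDomain R] {a : R} {N : ℕ} {h : R[X]}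

lemma eval_derivative_cofactor_ne_zero (h2 : (2 : R) ≠ 0) (hfac : quadIter a N = X ^ 2 * h)
    (h0 : h.eval 0 ≠ 0) (hmin : ∀ m, 1 ≤ m → m < N → (quadIter a m).eval 0 ≠ 0) {β : R}
    (hβ : h.eval β = 0) : (derivative h).eval β ≠ 0 := by
  intro hβ'
  have hβ0 : β ≠ 0 := by rintro rfl; exact h0 hβ
  have hN : (derivative (quadIter a N)).eval β = 0 := by
    simp [hfac, derivative_mul, hβ, hβ']
  obtain ⟨k, hkN, hk⟩ := exists_lt_eval_quadIter_eq_zero a h2 hN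
  rcases Nat.eq_zero_or_pos k with rfl | hk1
  · exact hβ0 (by simpa using hk)
  · have hroot : (quadIter a N).eval β = 0 := by simp [hfac, hβ]
    rw [← Nat.sub_add_cancel hkN.le, add_comm, quadIter_add, eval_comp, hk] at hroot
    exact hmin (N - k) (by omega) (by omega) hroot

lemma eval_derivative_quadIter_ne_zero (h2 : (2 : R) ≠ 0) (hfac : quadIter a N = X ^ 2 * h)
    (h0 : h.eval 0 ≠ 0) {n : ℕ} {α : R} (hα : h.eval ((quadIter a n).eval α) = 0) :
    (derivative (quadIter a n)).eval α ≠ 0 := by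
  intro hα'
  obtain ⟨k, hkn, hk⟩ := exists_lt_eval_quadIter_eq_zero a h2 hα'
  have hβ : (quadIter a n).eval α = (quadIter a (n - k)).eval 0 := by
    rw [← Nat.add_sub_cancel' hkn.le, quadIter_add, eval_comp, hk, Nat.add_sub_cancel_left]
  have hc : (quadIter a N).eval 0 = 0 := by simp [hfac]
  have hroot : (quadIter a N).eval ((quadIter a n).eval α) = 0 := by simp [hfac, hα]
  rw [hβ, ← eval_comp, ← quadIter_add, add_comm, eval_zero_quadIter_add_of_eval_zero a hc,
    ← hβ] at hroot
  exact h0 (hroot ▸ hα)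

lemma eval_comp_ne_zero_or_eval_derivative_comp_ne_zero (h2 : (2 : R) ≠ 0)
    (hfac : quadIter a N = X ^ 2 * h) (h0 : h.eval 0 ≠ 0)
    (hmin : ∀ m, 1 ≤ m → m < N → (quadIter a m).eval 0 ≠ 0) (n : ℕ) (α : R) :
    (h.comp (quadIter a n)).eval α ≠ 0 ∨ (derivative (h.comp (quadIter a n))).eval α ≠ 0 := by
  rw [or_iff_not_imp_left, not_not, eval_comp, derivative_comp, eval_mul, eval_comp]
  intro hα
  exact mul_ne_zero (eval_derivative_quadIter_ne_zero h2 hfac h0 hα)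
    (eval_derivative_cofactor_ne_zero h2 hfac h0 hmin hα)

end Cofactor

lemma separable_cofactor_comp_quadIter {K : Type*} [Field K] {a : K} {N : ℕ} {h : K[X]}
    (h2 : (2 : K) ≠ 0) (hfac : quadIter a N = X ^ 2 * h) (h0 : h.eval 0 ≠ 0)
    (hmin : ∀ m, 1 ≤ m → m < N → (quadIter a m).eval 0 ≠ 0) (n : ℕ) :
    (h.comp (quadIter a n)).Separable := by
  set f := algebraMap K (AlgebraicClosure K)
  rw [← separable_map f, map_comp, map_quadIter, separable_def,
    isCoprime_iff_aeval_ne_zero_of_isAlgClosed (AlgebraicClosure K) (k := AlgebraicClosure K)]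
  intro α
  have := eval_comp_ne_zero_or_eval_derivative_comp_ne_zero (a := f a) (h := h.map f) (N := N)
    (by simpa only [map_ofNat] using (map_ne_zero f).mpr h2) (by rw [← map_quadIter, hfac]; simp)
    (by simpa [eval_map_algebraMap] using h0)
    (fun m h1 h2 => by simpa [← map_quadIter, eval_map_algebraMap] using hmin m h1 h2) n α
  simpa using this

theorem squarefree_cofactor_general
    (ν : ℕ)
    (P : ℕ → Polynomial ℤ)
    (hP0 : P 0 = Polynomial.X)
    (hPs : ∀ n, P (n + 1) = (P n) ^ 2 - Polynomial.C (ν : ℤ))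
    (p : ℕ) [Fact p.Prime] (hp2 : p ≠ 2)
    (np : ℕ) (hnp1 : 1 ≤ np)
    (hnpdvd : (p : ℤ) ∣ (P np).coeff 0)
    (hnpleast : ∀ k, 1 ≤ k → (p : ℤ) ∣ (P k).coeff 0 → np ≤ k)
    (Rnp : Polynomial ℤ)
    (hRnp : P np = Rnp * Polynomial.X ^ 4 + Polynomial.C ((P np).coeff 2) * Polynomial.X ^ 2
      + Polynomial.C ((P np).coeff 0))
    (n : ℕ) :
    Squarefree (((P n).map (Int.castRingHom (ZMod p))) ^ 2 *
        (Rnp.map (Int.castRingHom (ZMod p))).comp ((P n).map (Int.castRingHom (ZMod p))) +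
      Polynomial.C (((P np).coeff 2 : ℤ) : ZMod p)) := by
  obtain rfl : P = quadIter (ν : ℤ) := funext fun m => by
    induction m with
    | zero => exact hP0
    | succ m ih => rw [hPs, ih, quadIter_succ]
  set f := Int.castRingHom (ZMod p)
  have hmap : ∀ m, (quadIter (ν : ℤ) m).map f = quadIter (ν : ZMod p) m := fun m => by
    rw [map_quadIter, map_natCast]
  have hcoeff : ∀ m k, f ((quadIter (ν : ℤ) m).coeff k) = (quadIter (ν : ZMod p) m).coeff k :=
    fun m k => by rw [← hmap, coeff_map]
  have h2 : (2 : ZMod p) ≠ 0 := Ring.two_ne_zero (by rwa [ZMod.ringChar_zmod_n])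
  have hmin : ∀ m, 1 ≤ m → m < np → (quadIter (ν : ZMod p) m).eval 0 ≠ 0 := by
    intro m hm1 hmnp hm0
    refine (hnpleast m hm1 ((ZMod.intCast_zmod_eq_zero_iff_dvd _ p).mp ?_)).not_gt hmnp
    rwa [← coeff_zero_eq_eval_zero, ← hcoeff] at hm0
  have hD : f ((quadIter (ν : ℤ) np).coeff 2) ≠ 0 :=
    hcoeff np 2 ▸ coeff_two_quadIter_ne_zero (ν : ZMod p) h2 hnp1 hmin
  have hC : f ((quadIter (ν : ℤ) np).coeff 0) = 0 :=
    (ZMod.intCast_zmod_eq_zero_iff_dvd _ p).mpr hnpdvd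
  have hfac : quadIter (ν : ZMod p) np =
      X ^ 2 * (X ^ 2 * Rnp.map f + C (f ((quadIter (ν : ℤ) np).coeff 2))) := by
    conv_lhs => rw [← hmap, hRnp]
    simp only [Polynomial.map_add, Polynomial.map_mul, Polynomial.map_pow, map_X, map_C, hC,
      map_zero, add_zero]
    ring
  convert (separable_cofactor_comp_quadIter h2 hfac (by simpa using hD) hmin n).squarefree using 1
  simp only [hmap, add_comp, mul_comp, pow_comp, X_comp, C_comp]
  rfl

/-- Let `ν ≥ 3` be a square-free integer with `ν ≡ 2` or `3 (mod 4)`, `P n = f^{∘n}` the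
`n`-th iterate of `f(t) = t² − ν`, and write `P m = R_m·t⁴ + D_m·t² + C_m` (for `m ≥ 1`),
where `D_m` is the coefficient of `t²` and `C_m = P m (0)`.  Let `p` be an odd prime not
dividing `ν`, dividing some `C m` with `m ≥ 1`, and let `n(p)` be the least positive index
`n` with `p ∣ C n`.  Then for every `n ≥ 0`, the polynomial
`P̄ₙ² · R̄_{n(p)}(P̄ₙ) + D̄_{n(p)}` has no repeated irreducible factor in `𝔽_p[t]`. -/
theorem squarefree_cofactor
    (ν : ℕ) (hν3 : 3 ≤ ν) (hsf : Squarefree ν) (hmod : ν % 4 = 2 ∨ ν % 4 = 3)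
    (P : ℕ → Polynomial ℤ)
    (hP0 : P 0 = Polynomial.X)
    (hPs : ∀ n, P (n + 1) = (P n) ^ 2 - Polynomial.C (ν : ℤ))
    (p : ℕ) [Fact p.Prime] (hp2 : p ≠ 2) (hpν : ¬ p ∣ ν)
    (np : ℕ) (hnp1 : 1 ≤ np)
    (hnpdvd : (p : ℤ) ∣ (P np).coeff 0)
    (hnpleast : ∀ k, 1 ≤ k → (p : ℤ) ∣ (P k).coeff 0 → np ≤ k)
    (Rnp : Polynomial ℤ)
    (hRnp : P np = Rnp * Polynomial.X ^ 4 + Polynomial.C ((P np).coeff 2) * Polynomial.X ^ 2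
      + Polynomial.C ((P np).coeff 0))
    (n : ℕ) :
    Squarefree (((P n).map (Int.castRingHom (ZMod p))) ^ 2 *
        (Rnp.map (Int.castRingHom (ZMod p))).comp ((P n).map (Int.castRingHom (ZMod p))) +
      Polynomial.C (((P np).coeff 2 : ℤ) : ZMod p)) :=
  squarefree_cofactor_general ν P hP0 hPs p hp2 np hnp1 hnpdvd hnpleast Rnp hRnp n
end

section
/- Let ν ≥ 3 be a square-free integer with ν ≡ 2 or 3 (mod 4). Define real numbers by x₀ = 0 and x_{k+1} = √(ν + x_k) (positive square root). Let n ≥ 1 and let p be a prime divisor of ν. Then for every maximal ideal 𝒫 of ℤ[x_n] lying over pℤ (i.e. with 𝒫 ∩ ℤ = pℤ), the localization of ℤ[x_n] at 𝒫 is a discrete valuation ring. -/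
/-!
With `f t = t ^ 2 - ν`, the number `ξ = xₙ` is a root of `f^[n]`, a polynomial that is Eisenstein
at `p`: its constant term `f^[n] 0` is `≡ -ν (mod p²)`, hence `p` times a `p`-adic unit `u`.
A prime `𝓟` of `ℤ[ξ]` over `p` contains `ξ` (as `ν ∈ 𝓟` and `ξ ↦ f ξ` preserves `𝓟ᶜ`), so it is
generated by `ξ` and `p`; since `ξ ∣ f^[n] ξ - f^[n] 0 = -p u` and `u ∉ 𝓟`, the maximal ideal of
the localization is generated by `ξ` alone.
-/

open Function Polynomial

theorem isDiscreteValuationRing_localization_of_le_span_pair {R : Type*} [CommRing R]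
    [IsDomain R] [IsNoetherianRing R] (𝓟 : Ideal R) [𝓟.IsPrime] (h𝓟 : 𝓟 ≠ ⊥)
    {ξ π u : R} (hξ : ξ ∈ 𝓟) (hle : 𝓟 ≤ Ideal.span {ξ, π}) (hu : u ∉ 𝓟) (hdvd : ξ ∣ π * u) :
    IsDiscreteValuationRing (Localization.AtPrime 𝓟) := by
  set f := algebraMap R (Localization.AtPrime 𝓟)
  have hunit : IsUnit (f u) := IsLocalization.map_units _ (⟨u, hu⟩ : 𝓟.primeCompl)
  have hπ : f π ∈ Ideal.span {f ξ} := by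
    obtain ⟨c, hc⟩ := hdvd
    rw [Ideal.mem_span_singleton]
    refine ⟨f c * ↑hunit.unit⁻¹, ?_⟩
    rw [← mul_assoc, ← map_mul, ← hc, map_mul, mul_assoc, hunit.mul_val_inv, mul_one]
  have hmax : IsLocalRing.maximalIdeal (Localization.AtPrime 𝓟) = Ideal.span {f ξ} := by
    rw [← Localization.AtPrime.map_eq_maximalIdeal]
    refine le_antisymm ?_
      (Ideal.span_le.mpr (Set.singleton_subset_iff.mpr (Ideal.mem_map_of_mem f hξ)))
    calc Ideal.map f 𝓟 ≤ Ideal.map f (Ideal.span {ξ, π}) := Ideal.map_mono hle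
      _ = Ideal.span {f ξ, f π} := by simp [Ideal.map_span, Set.image_pair]
      _ ≤ Ideal.span {f ξ} := by
        rw [Ideal.span_le, Set.pair_subset_iff]
        exact ⟨Ideal.subset_span rfl, hπ⟩
  have hnf : ¬ IsField (Localization.AtPrime 𝓟) := by
    rw [IsLocalRing.isField_iff_maximalIdeal_eq]
    intro hbot
    apply h𝓟
    rw [← Localization.AtPrime.under_maximalIdeal (I := 𝓟), hbot]
    exact Ideal.comap_bot_of_injective f
      (IsLocalization.injective _ 𝓟.primeCompl_le_nonZeroDivisors)
  have hprincipal : (IsLocalRing.maximalIdeal (Localization.AtPrime 𝓟)).IsPrincipal :=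
    ⟨f ξ, hmax⟩
  exact ((IsDiscreteValuationRing.TFAE _ hnf).out 0 4).mpr hprincipal

theorem Algebra.adjoin_singleton_exists_eq_mul_add_algebraMap {R A : Type*} [CommRing R]
    [CommRing A] [Algebra R A] (t : A) (a : Algebra.adjoin R {t}) :
    ∃ (c : Algebra.adjoin R {t}) (r : R),
      a = c * ⟨t, Algebra.self_mem_adjoin_singleton R t⟩ + algebraMap R _ r := by
  obtain ⟨a, ha⟩ := a
  obtain ⟨q, rfl⟩ := (Algebra.adjoin_singleton_eq_range_aeval R t ▸ ha :)
  refine ⟨⟨aeval t q.divX, aeval_mem_adjoin_singleton R t⟩, q.coeff 0, Subtype.ext ?_⟩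
  change aeval t q = aeval t q.divX * t + algebraMap R A (q.coeff 0)
  conv_lhs => rw [← X_mul_divX_add q, map_add, map_mul, aeval_X, aeval_C, mul_comm]

theorem Algebra.adjoin_singleton_ideal_le_span_pair {R A : Type*} [CommRing R] [CommRing A]
    [Algebra R A] {t : A} {I : Ideal (Algebra.adjoin R {t})}
    (ht : ⟨t, Algebra.self_mem_adjoin_singleton R t⟩ ∈ I) {π : R}
    (hI : I.comap (algebraMap R _) ≤ Ideal.span {π}) :
    I ≤ Ideal.span {⟨t, Algebra.self_mem_adjoin_singleton R t⟩, algebraMap R _ π} := by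
  intro z hz
  obtain ⟨c, r, rfl⟩ := Algebra.adjoin_singleton_exists_eq_mul_add_algebraMap t z
  have hr : r ∈ I.comap (algebraMap R _) :=
    (I.add_mem_iff_right (I.mul_mem_left c ht)).mp hz
  obtain ⟨k, rfl⟩ := Ideal.mem_span_singleton'.mp (hI hr)
  rw [map_mul, Ideal.mem_span_pair]
  exact ⟨c, algebraMap R _ k, by ring⟩

section Iterate

variable {R : Type*} [CommRing R]

def sqSub (c t : R) : R := t ^ 2 - c

theorem semiconj_sqSub {S : Type*} [CommRing S] (φ : R →+* S) (c : R) :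
    Semiconj φ (sqSub c) (sqSub (φ c)) := fun t => by simp [sqSub]

theorem sub_dvd_iterate_sub_iterate {f : R → R} (hf : ∀ a b, a - b ∣ f a - f b) (k : ℕ)
    (a b : R) : a - b ∣ f^[k] a - f^[k] b := by
  induction k with
  | zero => simp
  | succ k ih => simpa only [iterate_succ_apply'] using ih.trans (hf _ _)

theorem sub_dvd_sqSub_sub (c a b : R) : a - b ∣ sqSub c a - sqSub c b :=
  ⟨a + b, by simp only [sqSub]; ring⟩

theorem dvd_iterate_sqSub_zero {c a : R} {k : ℕ} (h : (sqSub c)^[k] a = 0) :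
    a ∣ (sqSub c)^[k] 0 := by
  simpa [h] using sub_dvd_iterate_sub_iterate (sub_dvd_sqSub_sub c) k a 0

theorem mem_of_iterate_sqSub_mem {I : Ideal R} [I.IsPrime] {c : R} (hc : c ∈ I) {k : ℕ} {a : R}
    (h : (sqSub c)^[k] a ∈ I) : a ∈ I := by
  have hmaps : Set.MapsTo (sqSub c) (↑I)ᶜ (↑I)ᶜ := fun t ht hsq =>
    ht (Ideal.IsPrime.mem_of_pow_mem ‹_› 2 ((I.sub_mem_iff_left hc).mp hsq))
  by_contra ha
  exact hmaps.iterate k ha h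

theorem sq_dvd_iterate_sqSub_zero_add {p c : R} (hpc : p ∣ c) (k : ℕ) :
    p ^ 2 ∣ (sqSub c)^[k + 1] 0 + c := by
  induction k with
  | zero => simp [sqSub]
  | succ k ih =>
    have hp : p ∣ (sqSub c)^[k + 1] 0 :=
      (dvd_add_left hpc).mp ((dvd_pow_self p two_ne_zero).trans ih)
    rw [iterate_succ_apply', sqSub, sub_add_cancel]
    exact pow_dvd_pow_of_dvd hp 2

theorem exists_iterate_sqSub_zero_eq_mul {p c : R} (hpc : p ∣ c) (hpc2 : ¬ p ^ 2 ∣ c) (k : ℕ) :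
    ∃ u, (sqSub c)^[k + 1] 0 = p * u ∧ ¬ p ∣ u := by
  obtain ⟨w, hw⟩ := sq_dvd_iterate_sqSub_zero_add hpc k
  obtain ⟨m, rfl⟩ := hpc
  refine ⟨p * w - m, by linear_combination hw, fun ⟨v, hv⟩ => hpc2 ⟨w - v, ?_⟩⟩
  linear_combination (-p) * hv

end Iterate

theorem iterate_sqSub_add_eq {ν : ℝ} (hν : 0 ≤ ν) {x : ℕ → ℝ} (hx0 : 0 ≤ x 0)
    (hxs : ∀ k, x (k + 1) = √(ν + x k)) (m k : ℕ) : (sqSub ν)^[k] (x (m + k)) = x m := by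
  have hx : ∀ j, 0 ≤ x j := fun
    | 0 => hx0
    | j + 1 => hxs j ▸ Real.sqrt_nonneg _
  induction k generalizing m with
  | zero => rfl
  | succ k ih =>
    rw [iterate_succ_apply, ← add_assoc, sqSub, hxs, Real.sq_sqrt (by linarith [hx (m + k)]),
      add_sub_cancel_left, ih]

theorem localization_dvr_of_prime_dvd_nu_general
    (ν : ℕ) (hsf : Squarefree ν)
    (x : ℕ → ℝ) (hx0 : x 0 = 0)
    (hxs : ∀ k, x (k + 1) = Real.sqrt (ν + x k))
    (n : ℕ) (hn : 1 ≤ n)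
    (p : ℕ) (hp : p.Prime) (hpν : p ∣ ν)
    (𝓟 : Ideal (Algebra.adjoin ℤ {x n})) [𝓟.IsMaximal]
    (h𝓟p : 𝓟.comap (algebraMap ℤ (Algebra.adjoin ℤ {x n})) = Ideal.span {(p : ℤ)}) :
    IsDiscreteValuationRing (Localization.AtPrime 𝓟) := by
  have : IsNoetherianRing (Algebra.adjoin ℤ {x n}) := isNoetherianRing_of_fg ⟨{x n}, by simp⟩
  set ξ : Algebra.adjoin ℤ {x n} := ⟨x n, Algebra.self_mem_adjoin_singleton ℤ (x n)⟩
  have hmem_iff (m : ℤ) : algebraMap ℤ _ m ∈ 𝓟 ↔ (p : ℤ) ∣ m := by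
    rw [← Ideal.mem_span_singleton, ← h𝓟p, Ideal.mem_comap]
  have hroot : (sqSub (ν : Algebra.adjoin ℤ {x n}))^[n] ξ = 0 := Subtype.val_injective <| by
    have := (semiconj_sqSub (Algebra.adjoin ℤ {x n}).val.toRingHom ν).iterate_right n ξ
    simp only [AlgHom.toRingHom_eq_coe, RingHom.coe_coe, Subalgebra.coe_val, map_natCast] at this
    simpa [this, hx0] using iterate_sqSub_add_eq (Nat.cast_nonneg ν) hx0.ge hxs 0 n
  have hν𝓟 : (ν : Algebra.adjoin ℤ {x n}) ∈ 𝓟 := by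
    simpa using (hmem_iff ν).mpr (Int.natCast_dvd_natCast.mpr hpν)
  have hξ : ξ ∈ 𝓟 := mem_of_iterate_sqSub_mem hν𝓟 (hroot ▸ 𝓟.zero_mem)
  have hpν2 : ¬ (p : ℤ) ^ 2 ∣ ν := fun h =>
    hp.not_isUnit (hsf p (by rw [← sq]; exact_mod_cast h))
  obtain ⟨u, hFu, hpu⟩ : ∃ u, (sqSub (ν : ℤ))^[n] 0 = p * u ∧ ¬ (p : ℤ) ∣ u :=
    Nat.sub_add_cancel hn ▸
      exists_iterate_sqSub_zero_eq_mul (Int.natCast_dvd_natCast.mpr hpν) hpν2 (n - 1)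
  have hdvd : ξ ∣ algebraMap ℤ _ p * algebraMap ℤ _ u := by
    have h := dvd_iterate_sqSub_zero hroot
    rwa [← map_zero (algebraMap ℤ _), ← map_natCast (algebraMap ℤ _),
      ← (semiconj_sqSub _ _).iterate_right, hFu, map_mul] at h
  have hne : 𝓟 ≠ ⊥ := fun h => by
    have := (hmem_iff p).mpr dvd_rfl
    simp [h, hp.ne_zero] at this
  exact isDiscreteValuationRing_localization_of_le_span_pair 𝓟 hne hξ
    (Algebra.adjoin_singleton_ideal_le_span_pair hξ h𝓟p.le) (fun h => hpu ((hmem_iff u).mp h)) hdvd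

/-- Let `ν ≥ 3` be a square-free integer with `ν ≡ 2` or `3 (mod 4)`, and let `x 0 = 0`,
`x (k+1) = √(ν + x k)`.  Let `n ≥ 1` and let `p` be a prime divisor of `ν`.  Then for every
maximal ideal `𝓟` of `ℤ[xₙ]` lying over `pℤ`, the localization of `ℤ[xₙ]` at `𝓟` is a
discrete valuation ring. -/
theorem localization_dvr_of_prime_dvd_nu
    (ν : ℕ) (hν3 : 3 ≤ ν) (hsf : Squarefree ν) (hmod : ν % 4 = 2 ∨ ν % 4 = 3)
    (x : ℕ → ℝ) (hx0 : x 0 = 0)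
    (hxs : ∀ k, x (k + 1) = Real.sqrt (ν + x k))
    (n : ℕ) (hn : 1 ≤ n)
    (p : ℕ) (hp : p.Prime) (hpν : p ∣ ν)
    (𝓟 : Ideal (Algebra.adjoin ℤ {x n})) [𝓟.IsMaximal]
    (h𝓟p : 𝓟.comap (algebraMap ℤ (Algebra.adjoin ℤ {x n})) = Ideal.span {(p : ℤ)}) :
    IsDiscreteValuationRing (Localization.AtPrime 𝓟) :=
  localization_dvr_of_prime_dvd_nu_general ν hsf x hx0 hxs n hn p hp hpν 𝓟 h𝓟p
end

section
/- Let ν ≥ 3 be a square-free integer with ν ≡ 2 or 3 (mod 4). Define real numbers by x₀ = 0 and x_{k+1} = √(ν + x_k) (positive square root). Let n ≥ 1. Then for every maximal ideal 𝒫 of ℤ[x_n] lying over 2ℤ (i.e. with 𝒫 ∩ ℤ = 2ℤ), the localization of ℤ[x_n] at 𝒫 is a discrete valuation ring. -/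
/-!
Put `c = ν·(n mod 2)` and `y = xₙ + c`. Then `y` is a root of `Q = Pₙ(X - c)`, and `Q` is
Eisenstein at 2: modulo 2 it is `X ^ 2 ^ n + const`, because squaring is additive in
characteristic 2, and its constant term `Pₙ(-c)` is `≡ 2 (mod 4)`, because on `ℤ/4` the map
`t ↦ t² - ν` sends `-ν` to 2 and its second iterate sends 0 to 2 and fixes 2 (this is what the
shift `c` is for). As `ℤ[xₙ] = ℤ[y]`, a prime `𝓟` over `2` equals `(2, y)`, and the Eisenstein
relation `y ^ N = -2 b` with `b ∉ 𝓟` makes `2` a multiple of `y` after localizing at `𝓟`. So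
the maximal ideal of the Noetherian local domain `ℤ[xₙ]_𝓟` is principal, and it is a DVR.
-/

open Polynomial IsLocalRing

section Eisenstein

variable {A R : Type*} [CommRing A] [CommRing R] [Algebra A R] {p : A} {y : R}

theorem Algebra.adjoin_singleton_add_algebraMap (a : R) (r : A) :
    Algebra.adjoin A {a + algebraMap A R r} = Algebra.adjoin A {a} := by
  refine le_antisymm (Algebra.adjoin_singleton_le ?_) (Algebra.adjoin_singleton_le ?_)
  · exact add_mem (Algebra.self_mem_adjoin_singleton A a) (Subalgebra.algebraMap_mem _ r)
  · simpa using sub_mem (Algebra.self_mem_adjoin_singleton A (a + algebraMap A R r))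
      (Subalgebra.algebraMap_mem (Algebra.adjoin A {a + algebraMap A R r}) r)

theorem Polynomial.aeval_eq_algebraMap_coeff_zero_add_mul (g : A[X]) (y : R) :
    aeval y g = algebraMap A R (g.coeff 0) + y * aeval y g.divX := by
  conv_lhs => rw [← X_mul_divX_add g]
  rw [map_add, map_mul, aeval_X, aeval_C, add_comm]

theorem Ideal.eq_span_pair_of_adjoin_eq_top (hy : Algebra.adjoin A {y} = ⊤) {𝓟 : Ideal R}
    (h𝓟 : 𝓟.comap (algebraMap A R) = Ideal.span {p}) (hy𝓟 : y ∈ 𝓟) :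
    𝓟 = Ideal.span {algebraMap A R p, y} := by
  refine le_antisymm (fun r hr => ?_) ?_
  · obtain ⟨g, rfl⟩ : ∃ g : A[X], aeval y g = r := by
      rw [← AlgHom.mem_range, ← Algebra.adjoin_singleton_eq_range_aeval, hy]
      trivial
    rw [aeval_eq_algebraMap_coeff_zero_add_mul] at hr ⊢
    have hcoeff : g.coeff 0 ∈ 𝓟.comap (algebraMap A R) := by
      rw [Ideal.mem_comap, ← add_sub_cancel_right (algebraMap A R _) (y * aeval y g.divX)]
      exact 𝓟.sub_mem hr (𝓟.mul_mem_right _ hy𝓟)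
    obtain ⟨a, ha⟩ := Ideal.mem_span_singleton'.mp (h𝓟 ▸ hcoeff)
    rw [← ha, map_mul, Ideal.mem_span_pair]
    exact ⟨algebraMap A R a, aeval y g.divX, by ring⟩
  · have hp𝓟 : algebraMap A R p ∈ 𝓟 := Ideal.mem_comap.mp (h𝓟 ▸ Ideal.mem_span_singleton_self p)
    rw [Ideal.span_le, Set.insert_subset_iff, Set.singleton_subset_iff]
    exact ⟨hp𝓟, hy𝓟⟩

theorem Polynomial.IsEisensteinAt.exists_eq_X_pow_add_C_mul {f : A[X]} (hmo : f.Monic)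
    (hN : f.natDegree ≠ 0) (hf : f.IsEisensteinAt (Ideal.span {p})) :
    ∃ B : A[X], f = X ^ f.natDegree + C p * B ∧ B.coeff 0 ∉ Ideal.span {p} := by
  obtain ⟨B, hB⟩ : C p ∣ f - X ^ f.natDegree := by
    refine (C_dvd_iff_dvd_coeff _ _).mpr fun i => ?_
    rw [coeff_sub, coeff_X_pow]
    by_cases hi : i = f.natDegree
    · rw [if_pos hi, hi, hmo.coeff_natDegree, sub_self]
      exact dvd_zero p
    · rw [if_neg hi, sub_zero, ← Ideal.mem_span_singleton]
      exact hf.coeff_mem hi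
  refine ⟨B, by rw [← hB]; ring, fun hB0 => hf.notMem ?_⟩
  have hcoeff : f.coeff 0 = p * B.coeff 0 := by
    simpa [coeff_X_pow, Ne.symm hN] using congrArg (coeff · 0) hB
  rw [hcoeff, Ideal.span_singleton_pow, Ideal.mem_span_singleton, sq]
  exact mul_dvd_mul_left p (Ideal.mem_span_singleton.mp hB0)

theorem Polynomial.IsEisensteinAt.mem_and_exists_pow_natDegree_eq_neg_mul {f : A[X]}
    (hmo : f.Monic) (hf : f.IsEisensteinAt (Ideal.span {p})) (hfy : aeval y f = 0)
    {𝓟 : Ideal R} [𝓟.IsPrime] (h𝓟 : 𝓟.comap (algebraMap A R) = Ideal.span {p}) :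
    y ∈ 𝓟 ∧ f.natDegree ≠ 0 ∧ ∃ b ∉ 𝓟, y ^ f.natDegree = -(algebraMap A R p * b) := by
  have hN : f.natDegree ≠ 0 := by
    intro hN
    rw [eq_one_of_monic_natDegree_zero hmo hN, map_one] at hfy
    exact 𝓟.ne_top_iff_one.mp Ideal.IsPrime.ne_top' (hfy ▸ 𝓟.zero_mem)
  obtain ⟨B, hB, hB0⟩ := hf.exists_eq_X_pow_add_C_mul hmo hN
  have hrel : y ^ f.natDegree = -(algebraMap A R p * aeval y B) := by
    rw [hB, map_add, map_mul, aeval_X_pow, aeval_C] at hfy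
    exact eq_neg_of_add_eq_zero_left hfy
  have hp𝓟 : algebraMap A R p ∈ 𝓟 := Ideal.mem_comap.mp (h𝓟 ▸ Ideal.mem_span_singleton_self p)
  have hy𝓟 : y ∈ 𝓟 :=
    Ideal.IsPrime.mem_of_pow_mem ‹_› _ (hrel ▸ 𝓟.neg_mem_iff.mpr (𝓟.mul_mem_right _ hp𝓟))
  refine ⟨hy𝓟, hN, aeval y B, fun hb => hB0 (h𝓟 ▸ Ideal.mem_comap.mpr ?_), hrel⟩
  rw [← add_sub_cancel_right (algebraMap A R _) (y * aeval y B.divX),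
    ← aeval_eq_algebraMap_coeff_zero_add_mul]
  exact 𝓟.sub_mem hb (𝓟.mul_mem_right _ hy𝓟)

theorem maximalIdeal_localization_eq_span_of_isEisensteinAt (hy : Algebra.adjoin A {y} = ⊤)
    {f : A[X]} (hmo : f.Monic) (hf : f.IsEisensteinAt (Ideal.span {p})) (hfy : aeval y f = 0)
    (𝓟 : Ideal R) [𝓟.IsPrime] (h𝓟 : 𝓟.comap (algebraMap A R) = Ideal.span {p}) :
    maximalIdeal (Localization.AtPrime 𝓟) = Ideal.span {algebraMap R _ y} := by
  obtain ⟨hy𝓟, hN, b, hb, hrel⟩ := hf.mem_and_exists_pow_natDegree_eq_neg_mul hmo hfy h𝓟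
  set φ := algebraMap R (Localization.AtPrime 𝓟)
  obtain ⟨u, hu⟩ : IsUnit (φ b) := IsLocalization.map_units _ (⟨b, hb⟩ : 𝓟.primeCompl)
  have hpy : φ (algebraMap A R p) ∈ Ideal.span {φ y} := by
    refine Ideal.mem_span_singleton.mpr ⟨-(φ y ^ (f.natDegree - 1)) * ↑u⁻¹, ?_⟩
    calc φ (algebraMap A R p) = φ (algebraMap A R p * b) * ↑u⁻¹ := by
          rw [map_mul, ← hu, u.mul_inv_cancel_right]
      _ = -(φ y ^ (f.natDegree - 1 + 1)) * ↑u⁻¹ := by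
          rw [Nat.sub_one_add_one hN, ← map_pow, hrel, map_neg, neg_neg]
      _ = _ := by ring
  calc maximalIdeal (Localization.AtPrime 𝓟)
      = 𝓟.map φ := Localization.AtPrime.map_eq_maximalIdeal.symm
    _ = Ideal.span {φ (algebraMap A R p), φ y} := by
      rw [← Set.image_pair, ← Ideal.map_span, ← Ideal.eq_span_pair_of_adjoin_eq_top hy h𝓟 hy𝓟]
    _ = Ideal.span {φ y} := by
      rw [Ideal.span_insert, sup_eq_right, Ideal.span_singleton_le_iff_mem]
      exact hpy

theorem isDiscreteValuationRing_localization_of_isEisensteinAt [IsNoetherianRing A] [IsDomain R]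
    (hy : Algebra.adjoin A {y} = ⊤) {f : A[X]} (hmo : f.Monic)
    (hf : f.IsEisensteinAt (Ideal.span {p})) (hfy : aeval y f = 0) (𝓟 : Ideal R) [𝓟.IsPrime]
    (h𝓟 : 𝓟.comap (algebraMap A R) = Ideal.span {p}) (h𝓟bot : 𝓟 ≠ ⊥) :
    IsDiscreteValuationRing (Localization.AtPrime 𝓟) := by
  have : Algebra.FiniteType A R := ⟨by rw [← hy]; exact ⟨{y}, by simp⟩⟩
  have := Algebra.FiniteType.isNoetherianRing A R
  have hprin : (maximalIdeal (Localization.AtPrime 𝓟)).IsPrincipal :=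
    ⟨⟨_, maximalIdeal_localization_eq_span_of_isEisensteinAt hy hmo hf hfy 𝓟 h𝓟⟩⟩
  exact ((IsDiscreteValuationRing.TFAE _
    (IsLocalization.AtPrime.not_isField R h𝓟bot _)).out 0 4).mpr hprin

end Eisenstein

theorem Polynomial.Monic.isEisensteinAt_of_map_eq_X_pow_add_C {p : ℕ} [Fact (1 < p)] {f : ℤ[X]}
    (hmo : f.Monic) {N : ℕ} {a : ZMod p} (hmap : f.map (Int.castRingHom (ZMod p)) = X ^ N + C a)
    (hdvd : (p : ℤ) ∣ f.coeff 0) (hndvd : ¬ (p : ℤ) ^ 2 ∣ f.coeff 0) :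
    f.IsEisensteinAt (Ideal.span {(p : ℤ)}) := by
  have hdeg : f.natDegree = N := by
    rw [← hmo.natDegree_map (Int.castRingHom (ZMod p)), hmap, natDegree_X_pow_add_C]
  refine hmo.isEisensteinAt_of_mem_of_notMem ?_ (fun {i} hi => ?_) ?_
  · rw [Ne, Ideal.span_singleton_eq_top, Int.isUnit_iff_natAbs_eq, Int.natAbs_natCast]
    exact (Fact.out : 1 < p).ne'
  · rw [Ideal.mem_span_singleton]
    rcases Nat.eq_zero_or_pos i with rfl | hi0
    · exact hdvd
    rw [← ZMod.intCast_zmod_eq_zero_iff_dvd, ← eq_intCast (Int.castRingHom (ZMod p)),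
      ← coeff_map, hmap, coeff_add, coeff_X_pow, coeff_C, if_neg (by omega), if_neg (by omega),
      add_zero]
  · rwa [Ideal.span_singleton_pow, Ideal.mem_span_singleton]

section SqSubIterate

variable {R : Type*} [CommRing R]

noncomputable def sqSubIterate (ν : R) (n : ℕ) : R[X] := (fun q => q ^ 2 - C ν)^[n] X

theorem aeval_sqSubIterate {A : Type*} [CommRing A] [Algebra R A] (ν : R) (n : ℕ) (a : A) :
    aeval a (sqSubIterate ν n) = (fun b => b ^ 2 - algebraMap R A ν)^[n] a := by
  have hsemiconj : Function.Semiconj (aeval a) (fun q => q ^ 2 - C ν)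
      (fun b => b ^ 2 - algebraMap R A ν) := fun q => by simp
  rw [sqSubIterate, hsemiconj.iterate_right n X, aeval_X]

theorem sqSubIterate_comp (ν : R) (n : ℕ) (q : R[X]) :
    (sqSubIterate ν n).comp q = (fun r => r ^ 2 - C ν)^[n] q := by
  rw [comp_eq_aeval, aeval_sqSubIterate, algebraMap_eq]

theorem map_sqSubIterate {S : Type*} [CommRing S] (φ : R →+* S) (ν : R) (n : ℕ) :
    (sqSubIterate ν n).map φ = sqSubIterate (φ ν) n := by
  have hsemiconj : Function.Semiconj (map φ) (fun q => q ^ 2 - C ν)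
      (fun q => q ^ 2 - C (φ ν)) := fun q => by simp
  rw [sqSubIterate, hsemiconj.iterate_right n X, map_X, sqSubIterate]

theorem sqSubIterate_monic [Nontrivial R] (ν : R) (n : ℕ) : (sqSubIterate ν n).Monic := by
  induction n with
  | zero => exact monic_X
  | succ n ih =>
    have hsucc : sqSubIterate ν (n + 1) = (sqSubIterate ν n).comp (X ^ 2 - C ν) := by
      rw [sqSubIterate_comp, sqSubIterate, Function.iterate_succ_apply]
    rw [hsucc]
    exact ih.comp (monic_X_pow_sub_C ν two_ne_zero) (by rw [natDegree_X_pow_sub_C]; norm_num)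

theorem sqSubIterate_comp_X_sub_C_monic [Nontrivial R] (ν c : R) (n : ℕ) :
    ((sqSubIterate ν n).comp (X - C c)).Monic :=
  (sqSubIterate_monic ν n).comp (monic_X_sub_C c) (by rw [natDegree_X_sub_C]; exact one_ne_zero)

theorem iterate_sq_sub_X_add_C [CharP R 2] (ν a : R) (n : ℕ) :
    (fun q => q ^ 2 - C ν)^[n] (X + C a) = X ^ 2 ^ n + C ((fun b => b ^ 2 - ν)^[n] a) := by
  induction n with
  | zero => simp
  | succ n ih =>
    rw [Function.iterate_succ_apply', ih, Function.iterate_succ_apply', add_pow_char, ← pow_mul,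
      ← pow_succ, ← C_pow, add_sub_assoc, C_sub]

theorem iterate_sq_sub_eq_of_sq_succ {A : Type*} [CommRing A] {ν : A} {x : ℕ → A}
    (hx : ∀ k, x (k + 1) ^ 2 = ν + x k) (m k : ℕ) :
    (fun b => b ^ 2 - ν)^[k] (x (m + k)) = x m := by
  induction k generalizing m with
  | zero => rfl
  | succ k ih =>
    rw [Function.iterate_succ_apply, ← add_assoc]
    simpa only [hx, add_sub_cancel_left] using ih m

end SqSubIterate

theorem iterate_sq_sub_zmod_four_eq_two {ν : ZMod 4} (hν : ν = 2 ∨ ν = 3) {n : ℕ} (hn : n ≠ 0) :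
    (fun a => a ^ 2 - ν)^[n] (-(ν * (n % 2 : ℕ))) = 2 := by
  set g := fun a : ZMod 4 => a ^ 2 - ν
  have hfix : Function.IsFixedPt g^[2] 2 := by rcases hν with rfl | rfl <;> decide
  obtain ⟨k, rfl | rfl⟩ := Nat.even_or_odd' n
  · obtain ⟨k, rfl⟩ := Nat.exists_eq_succ_of_ne_zero (by omega : k ≠ 0)
    have h0 : g^[2] 0 = 2 := by rcases hν with rfl | rfl <;> decide
    rw [Nat.mul_mod_right, Nat.cast_zero, mul_zero, neg_zero, Function.iterate_mul,
      Function.iterate_succ_apply, h0, (hfix.iterate k).eq]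
  · have h1 : g (-ν) = 2 := by rcases hν with rfl | rfl <;> decide
    rw [Nat.mul_add_mod, Nat.cast_one, mul_one, Function.iterate_add_apply, Function.iterate_one,
      h1, Function.iterate_mul, (hfix.iterate k).eq]

theorem sqSubIterate_comp_isEisensteinAt_two {ν : ℤ} (hν : ν % 4 = 2 ∨ ν % 4 = 3) {n : ℕ}
    (hn : n ≠ 0) :
    ((sqSubIterate ν n).comp (X - C (ν * (n % 2 : ℕ)))).IsEisensteinAt (Ideal.span {2}) := by
  set c : ℤ := ν * (n % 2 : ℕ)
  have hν4 : (ν : ZMod 4) = 2 ∨ (ν : ZMod 4) = 3 := by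
    rcases hν with h | h <;> simp [← ZMod.intCast_mod ν 4, h]
  have hconst : (((sqSubIterate ν n).comp (X - C c)).coeff 0 : ZMod 4) = 2 := by
    rw [coeff_zero_eq_eval_zero, eval_comp, eval_sub, eval_X, eval_C, zero_sub,
      ← eq_intCast (algebraMap ℤ (ZMod 4)), ← aeval_algebraMap_apply_eq_algebraMap_eval,
      aeval_sqSubIterate, algebraMap_int_eq, eq_intCast, eq_intCast, Int.cast_neg, Int.cast_mul,
      Int.cast_natCast]
    exact iterate_sq_sub_zmod_four_eq_two hν4 hn
  have hmod4 : ((sqSubIterate ν n).comp (X - C c)).coeff 0 % 4 = 2 := by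
    simpa using (ZMod.intCast_eq_intCast_iff' _ 2 4).mp (by simpa using hconst)
  have hmap : ((sqSubIterate ν n).comp (X - C c)).map (Int.castRingHom (ZMod 2)) =
      X ^ 2 ^ n + C ((fun b => b ^ 2 - (ν : ZMod 2))^[n] (-c)) := by
    rw [Polynomial.map_comp, map_sqSubIterate, Polynomial.map_sub, map_X, map_C, sub_eq_add_neg,
      ← C_neg, sqSubIterate_comp, iterate_sq_sub_X_add_C, eq_intCast, eq_intCast]
  simpa using (sqSubIterate_comp_X_sub_C_monic ν c n).isEisensteinAt_of_map_eq_X_pow_add_C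
    (p := 2) hmap (by omega) (by omega)

theorem localization_dvr_at_two_general
    (ν : ℕ) (hmod : ν % 4 = 2 ∨ ν % 4 = 3)
    (x : ℕ → ℝ) (hx0 : x 0 = 0)
    (hxs : ∀ k, x (k + 1) = Real.sqrt (ν + x k))
    (n : ℕ) (hn : 1 ≤ n)
    (𝓟 : Ideal (Algebra.adjoin ℤ {x n})) [𝓟.IsMaximal]
    (h𝓟p : 𝓟.comap (algebraMap ℤ (Algebra.adjoin ℤ {x n})) = Ideal.span {(2 : ℤ)}) :
    IsDiscreteValuationRing (Localization.AtPrime 𝓟) := by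
  set xₙ : Algebra.adjoin ℤ {x n} := ⟨x n, Algebra.self_mem_adjoin_singleton ℤ (x n)⟩
  set c : ℤ := ν * (n % 2 : ℕ)
  have hsq (k : ℕ) : x (k + 1) ^ 2 = ν + x k := by
    have hxk : 0 ≤ x k := by cases k <;> simp [hx0, hxs]
    rw [hxs, Real.sq_sqrt (by positivity)]
  have hy : Algebra.adjoin ℤ {xₙ + algebraMap ℤ _ c} = ⊤ := by
    rw [Algebra.adjoin_singleton_add_algebraMap, ← Algebra.adjoin_adjoin_coe_preimage]
    exact congrArg _ (Set.ext fun z => Subtype.ext_iff)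
  have hQy : aeval (xₙ + algebraMap ℤ _ c) ((sqSubIterate (ν : ℤ) n).comp (X - C c)) = 0 := by
    apply Subtype.ext
    rw [aeval_comp, aeval_subalgebra_coe]
    simpa [xₙ, aeval_sqSubIterate, hx0] using iterate_sq_sub_eq_of_sq_succ hsq 0 n
  have h𝓟bot : 𝓟 ≠ ⊥ := by
    refine (Submodule.ne_bot_iff 𝓟).mpr ⟨algebraMap ℤ _ 2, ?_, fun h => ?_⟩
    · exact Ideal.mem_comap.mp (h𝓟p ▸ Ideal.mem_span_singleton_self 2)
    · simpa using congrArg Subtype.val h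
  exact isDiscreteValuationRing_localization_of_isEisensteinAt hy
    (sqSubIterate_comp_X_sub_C_monic _ c n) (sqSubIterate_comp_isEisensteinAt_two (by omega)
    (by omega)) hQy 𝓟 h𝓟p h𝓟bot

/-- Let `ν ≥ 3` be a square-free integer with `ν ≡ 2` or `3 (mod 4)`, and let `x 0 = 0`,
`x (k+1) = √(ν + x k)`.  Let `n ≥ 1`.  Then for every maximal ideal `𝓟` of `ℤ[xₙ]` lying
over `2ℤ`, the localization of `ℤ[xₙ]` at `𝓟` is a discrete valuation ring. -/
theorem localization_dvr_at_two
    (ν : ℕ) (hν3 : 3 ≤ ν) (hsf : Squarefree ν) (hmod : ν % 4 = 2 ∨ ν % 4 = 3)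
    (x : ℕ → ℝ) (hx0 : x 0 = 0)
    (hxs : ∀ k, x (k + 1) = Real.sqrt (ν + x k))
    (n : ℕ) (hn : 1 ≤ n)
    (𝓟 : Ideal (Algebra.adjoin ℤ {x n})) [𝓟.IsMaximal]
    (h𝓟p : 𝓟.comap (algebraMap ℤ (Algebra.adjoin ℤ {x n})) = Ideal.span {(2 : ℤ)}) :
    IsDiscreteValuationRing (Localization.AtPrime 𝓟) :=
  localization_dvr_at_two_general ν hmod x hx0 hxs n hn 𝓟 h𝓟p
end
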